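/- arXiv:1607.06796 — 9 statements merged into one kernel-verified Lean document; each statement's English description precedes it below -/
import Mathlib

section
/- Traveling waves of the hyperbolic Allen–Cahn equation are stationary: under the stated hypotheses, the identity c ∫_ℝ g(Φ(ξ)) Φ'(ξ)² dξ = F(1) − F(−1) holds, and since F(1) = F(−1), g ≥ c_g > 0 and Φ is nonconstant, necessarily c = 0. -/
open Filter MeasureTheory Topology

/-!
Multiplying the wave equation by `Φ'` shows that the energy
`E = (ε² − c²τ)/2 · Φ'² − F(Φ)` satisfies `E' = −c g(Φ) Φ'²`. Integrating over `ℝ` and using the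
limits of `Φ` and `Φ'` at `±∞` gives `c ∫ g(Φ) Φ'² = F(1) − F(−1) = 0`. The integral is positive,
since its integrand is continuous, nonnegative and nonzero wherever `Φ' ≠ 0`, and `Φ'` cannot vanish
identically because `Φ` has different limits at `±∞`. Hence `c = 0`.
-/

section Energy

variable {F Φ : ℝ → ℝ}

theorem hasDerivAt_energy (a : ℝ) {x : ℝ} (hF : DifferentiableAt ℝ F (Φ x))
    (hΦ : DifferentiableAt ℝ Φ x) (hΦ' : DifferentiableAt ℝ (deriv Φ) x) :
    HasDerivAt (fun y => a / 2 * deriv Φ y ^ 2 - F (Φ y))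
      (deriv Φ x * (a * deriv (deriv Φ) x - deriv F (Φ x))) x := by
  refine (((hΦ'.hasDerivAt.pow 2).const_mul (a / 2)).sub
    (hF.hasDerivAt.comp x hΦ.hasDerivAt)).congr_deriv ?_
  ring

theorem mul_integral_dissipation_eq {g : ℝ → ℝ} {a c u_top u_bot : ℝ}
    (hF : Differentiable ℝ F) (hΦ : Differentiable ℝ Φ) (hΦ' : Differentiable ℝ (deriv Φ))
    (heq : ∀ ξ, a * deriv (deriv Φ) ξ + c * g (Φ ξ) * deriv Φ ξ - deriv F (Φ ξ) = 0)
    (hlim_top : Tendsto Φ atTop (𝓝 u_top)) (hlim_bot : Tendsto Φ atBot (𝓝 u_bot))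
    (hlim_top' : Tendsto (deriv Φ) atTop (𝓝 0)) (hlim_bot' : Tendsto (deriv Φ) atBot (𝓝 0))
    (hint : Integrable (fun ξ => g (Φ ξ) * deriv Φ ξ ^ 2)) :
    c * ∫ ξ, g (Φ ξ) * deriv Φ ξ ^ 2 = F u_top - F u_bot := by
  have hE : ∀ ξ, HasDerivAt (fun y => a / 2 * deriv Φ y ^ 2 - F (Φ y))
      (-c * (g (Φ ξ) * deriv Φ ξ ^ 2)) ξ := fun ξ => by
    convert hasDerivAt_energy a (hF (Φ ξ)) (hΦ ξ) (hΦ' ξ) using 1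
    linear_combination -deriv Φ ξ * heq ξ
  have hE_top := ((hlim_top'.pow 2).const_mul (a / 2)).sub
    ((hF.continuous.tendsto u_top).comp hlim_top)
  have hE_bot := ((hlim_bot'.pow 2).const_mul (a / 2)).sub
    ((hF.continuous.tendsto u_bot).comp hlim_bot)
  have := integral_of_hasDerivAt_of_tendsto hE (hint.const_mul (-c)) hE_bot hE_top
  rw [integral_const_mul] at this
  linarith

end Energy

theorem exists_deriv_ne_zero_of_tendsto_ne {Φ : ℝ → ℝ} {u_top u_bot : ℝ}
    (hΦ : Differentiable ℝ Φ) (hlim_top : Tendsto Φ atTop (𝓝 u_top))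
    (hlim_bot : Tendsto Φ atBot (𝓝 u_bot)) (hne : u_top ≠ u_bot) :
    ∃ x, deriv Φ x ≠ 0 := by
  by_contra! hΦ'
  have hconst : Φ = fun _ => Φ 0 := funext fun x => is_const_of_deriv_eq_zero hΦ hΦ' x 0
  rw [hconst] at hlim_top hlim_bot
  exact hne ((tendsto_nhds_unique tendsto_const_nhds hlim_top).symm.trans
    (tendsto_nhds_unique tendsto_const_nhds hlim_bot))

theorem traveling_waves_are_stationary_general
    (F g Φ : ℝ → ℝ) (c_g ε τ c : ℝ)
    (hF : ContDiff ℝ 1 F) (hFeq : F 1 = F (-1))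
    (hg : Continuous g) (hcg : 0 < c_g) (hgc : ∀ u : ℝ, c_g ≤ g u)
    (hΦ : ContDiff ℝ 2 Φ)
    (heq : ∀ ξ : ℝ,
      (ε ^ 2 - c ^ 2 * τ) * deriv (deriv Φ) ξ + c * g (Φ ξ) * deriv Φ ξ
        - deriv F (Φ ξ) = 0)
    (hlim_top : Tendsto Φ atTop (nhds 1))
    (hlim_bot : Tendsto Φ atBot (nhds (-1)))
    (hlim_top' : Tendsto (deriv Φ) atTop (nhds 0))
    (hlim_bot' : Tendsto (deriv Φ) atBot (nhds 0))
    (hint2 : Integrable (fun ξ : ℝ => g (Φ ξ) * (deriv Φ ξ) ^ 2)) :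
    c * (∫ ξ : ℝ, g (Φ ξ) * (deriv Φ ξ) ^ 2) = F 1 - F (-1) ∧ c = 0 := by
  have hΦd : Differentiable ℝ Φ := hΦ.differentiable (by norm_num)
  have hΦ'd : Differentiable ℝ (deriv Φ) := (hΦ.iterate_deriv' 1 1).differentiable (by norm_num)
  have hg_pos : ∀ u, 0 < g u := fun u => hcg.trans_le (hgc u)
  have henergy := mul_integral_dissipation_eq (hF.differentiable (by norm_num)) hΦd hΦ'd heq
    hlim_top hlim_bot hlim_top' hlim_bot' hint2
  obtain ⟨x, hx⟩ := exists_deriv_ne_zero_of_tendsto_ne hΦd hlim_top hlim_bot (by norm_num)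
  have hpos : 0 < ∫ ξ, g (Φ ξ) * deriv Φ ξ ^ 2 :=
    integral_pos_of_integrable_nonneg_nonzero
      ((hg.comp hΦd.continuous).mul (hΦ'd.continuous.pow 2))
      hint2 (fun ξ => mul_nonneg (hg_pos _).le (sq_nonneg _))
      (mul_ne_zero (hg_pos (Φ x)).ne' (pow_ne_zero 2 hx))
  refine ⟨henergy, ?_⟩
  rw [hFeq, sub_self] at henergy
  exact (mul_eq_zero.mp henergy).resolve_right hpos.ne'

/-- Traveling waves of the hyperbolic Allen–Cahn equation are stationary:
the identity `c ∫ g(Φ) Φ'² = F(1) − F(−1)` holds, and since `F(1) = F(−1)`,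
`g ≥ c_g > 0` and `Φ` is nonconstant (it has limits `±1`), necessarily `c = 0`. -/
theorem traveling_waves_are_stationary
    (F g Φ : ℝ → ℝ) (c_g ε τ c : ℝ)
    (hF : ContDiff ℝ 1 F) (hFeq : F 1 = F (-1))
    (hg : Continuous g) (hcg : 0 < c_g) (hgc : ∀ u : ℝ, c_g ≤ g u)
    (hε : 0 < ε) (hτ : 0 < τ)
    (hΦ : ContDiff ℝ 2 Φ)
    (heq : ∀ ξ : ℝ,
      (ε ^ 2 - c ^ 2 * τ) * deriv (deriv Φ) ξ + c * g (Φ ξ) * deriv Φ ξ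
        - deriv F (Φ ξ) = 0)
    (hlim_top : Tendsto Φ atTop (nhds 1))
    (hlim_bot : Tendsto Φ atBot (nhds (-1)))
    (hlim_top' : Tendsto (deriv Φ) atTop (nhds 0))
    (hlim_bot' : Tendsto (deriv Φ) atBot (nhds 0))
    (hint1 : Integrable (fun ξ : ℝ => (deriv Φ ξ) ^ 2))
    (hint2 : Integrable (fun ξ : ℝ => g (Φ ξ) * (deriv Φ ξ) ^ 2)) :
    c * (∫ ξ : ℝ, g (Φ ξ) * (deriv Φ ξ) ^ 2) = F 1 - F (-1) ∧ c = 0 :=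
  traveling_waves_are_stationary_general F g Φ c_g ε τ c hF hFeq hg hcg hgc hΦ heq hlim_top hlim_bot
    hlim_top' hlim_bot' hint2
end

section
/- Length formula for Dirichlet steady states: let L > 0 and let φ : [−L/2, L/2] → ℝ be C² with φ''(x) = f(φ(x)) on [−L/2, L/2], φ(−L/2) = φ(L/2) = 0, φ'(0) = 0, φ'(x) > 0 for all x ∈ [−L/2, 0), and set M := φ(0). Then F(s) > F(M) for every s ∈ [0, M), the improper integral ∫₀^M ds/√(F(s) − F(M)) converges, and L = √2 ∫₀^M ds/√(F(s) − F(M)). -/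
/-!
Multiplying `φ'' = F'(φ)` by `φ'` shows that the energy `φ'²/2 - F(φ)` is constant, so with
`φ'(0) = 0` one gets `φ'(x) = √(2 (F(φ x) - F(M)))` on the increasing half `[-L/2, 0]`. There `φ`
maps `[-L/2, 0]` bijectively onto `[0, M]`, and the substitution `s = φ(x)` turns
`∫₀^M ds / √(F(s) - F(M))` into `∫_{-L/2}^0 √2 dx = √2 · L/2`.
-/

open MeasureTheory Set

theorem energy_conservation {F φ φ' φ'' : ℝ → ℝ} {a b : ℝ} (hF : Differentiable ℝ F)
    (hd1 : ∀ x ∈ Icc a b, HasDerivWithinAt φ (φ' x) (Icc a b) x)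
    (hd2 : ∀ x ∈ Icc a b, HasDerivWithinAt φ' (φ'' x) (Icc a b) x)
    (heq : ∀ x ∈ Icc a b, φ'' x = deriv F (φ x)) {x y : ℝ} (hx : x ∈ Icc a b)
    (hy : y ∈ Icc a b) : φ' x ^ 2 / 2 - F (φ x) = φ' y ^ 2 / 2 - F (φ y) := by
  have hderiv : ∀ z ∈ Icc a b,
      HasDerivWithinAt (fun z => φ' z ^ 2 / 2 - F (φ z)) 0 (Icc a b) z := by
    intro z hz
    have hFz := (hF (φ z)).hasDerivAt.comp_hasDerivWithinAt z (hd1 z hz)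
    refine (((hd2 z hz).pow 2).div_const 2 |>.sub hFz).congr_deriv ?_
    rw [heq z hz]
    ring
  have hconst := constant_of_has_deriv_right_zero
    (fun z hz => (hderiv z hz).continuousWithinAt)
    (fun z hz => (hderiv z (Ico_subset_Icc_self hz)).mono_of_mem_nhdsWithin
      (Icc_mem_nhdsGE_of_mem hz))
  rw [hconst x hx, hconst y hy]

theorem integrableOn_and_setIntegral_Ioo_image_of_abs_deriv_mul_comp_eq {φ φ' g : ℝ → ℝ}
    {a b c : ℝ} (hab : a ≤ b) (hcont : ContinuousOn φ (Icc a b))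
    (hmono : StrictMonoOn φ (Icc a b))
    (hderiv : ∀ x ∈ Ioo a b, HasDerivWithinAt φ (φ' x) (Ioo a b) x)
    (hconst : ∀ x ∈ Ioo a b, |φ' x| * g (φ x) = c) :
    IntegrableOn g (Ioo (φ a) (φ b)) ∧ ∫ s in Ioo (φ a) (φ b), g s = c * (b - a) := by
  have hinj : InjOn φ (Ioo a b) := hmono.injOn.mono Ioo_subset_Icc_self
  rw [← hcont.image_Ioo_of_strictMonoOn hab hmono,
    integrableOn_image_iff_integrableOn_abs_deriv_smul measurableSet_Ioo hderiv hinj,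
    integral_image_eq_integral_abs_deriv_smul measurableSet_Ioo hderiv hinj]
  simp only [smul_eq_mul]
  constructor
  · exact (integrableOn_const measure_Ioo_lt_top.ne).congr_fun (fun x hx => (hconst x hx).symm)
      measurableSet_Ioo
  · rw [setIntegral_congr_fun measurableSet_Ioo hconst, setIntegral_const, measureReal_def,
      Real.volume_Ioo, ENNReal.toReal_ofReal (sub_nonneg.2 hab), smul_eq_mul, mul_comm]

theorem increasing_arc_time_formula {F φ φ' φ'' : ℝ → ℝ} {a b : ℝ} (hF : Differentiable ℝ F)
    (hab : a ≤ b)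
    (hd1 : ∀ x ∈ Icc a b, HasDerivWithinAt φ (φ' x) (Icc a b) x)
    (hd2 : ∀ x ∈ Icc a b, HasDerivWithinAt φ' (φ'' x) (Icc a b) x)
    (heq : ∀ x ∈ Icc a b, φ'' x = deriv F (φ x)) (hturn : φ' b = 0)
    (hpos : ∀ x ∈ Ico a b, 0 < φ' x) :
    (∀ s ∈ Ico (φ a) (φ b), F (φ b) < F s) ∧
    IntegrableOn (fun s => 1 / Real.sqrt (F s - F (φ b))) (Ioo (φ a) (φ b)) ∧
    ∫ s in Ioo (φ a) (φ b), 1 / Real.sqrt (F s - F (φ b)) = Real.sqrt 2 * (b - a) := by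
  have hbI : b ∈ Icc a b := right_mem_Icc.2 hab
  have hgap : ∀ x ∈ Ico a b, F (φ x) - F (φ b) = φ' x ^ 2 / 2 := fun x hx => by
    have := energy_conservation hF hd1 hd2 heq (Ico_subset_Icc_self hx) hbI
    rw [hturn] at this
    linarith
  have hcont : ContinuousOn φ (Icc a b) := fun x hx => (hd1 x hx).continuousWithinAt
  have hderiv : ∀ x ∈ Ioo a b, HasDerivWithinAt φ (φ' x) (Ioo a b) x := fun x hx =>
    (hd1 x (Ioo_subset_Icc_self hx)).mono Ioo_subset_Icc_self
  have hmono : StrictMonoOn φ (Icc a b) :=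
    strictMonoOn_of_hasDerivWithinAt_pos (convex_Icc a b) hcont
      (by simpa only [interior_Icc] using hderiv)
      (by simpa only [interior_Icc] using fun x hx => hpos x (Ioo_subset_Ico_self hx))
  refine ⟨?_, integrableOn_and_setIntegral_Ioo_image_of_abs_deriv_mul_comp_eq hab hcont hmono
    hderiv fun x hx => ?_⟩
  · rw [← hcont.image_Ico_of_strictMonoOn hab hmono]
    rintro _ ⟨x, hx, rfl⟩
    have := hpos x hx
    nlinarith [hgap x hx]
  · have hx' := hpos x (Ioo_subset_Ico_self hx)
    have hsqrt : Real.sqrt (F (φ x) - F (φ b)) = φ' x / Real.sqrt 2 := by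
      rw [hgap x (Ioo_subset_Ico_self hx), Real.sqrt_div (sq_nonneg _), Real.sqrt_sq hx'.le]
    rw [hsqrt, abs_of_pos hx']
    field_simp

theorem length_formula_dirichlet_steady_state_general
    (F : ℝ → ℝ) (hF : ContDiff ℝ 1 F)
    (L : ℝ) (hL : 0 < L)
    (φ φ' φ'' : ℝ → ℝ)
    (hd1 : ∀ x ∈ Set.Icc (-(L / 2)) (L / 2),
      HasDerivWithinAt φ (φ' x) (Set.Icc (-(L / 2)) (L / 2)) x)
    (hd2 : ∀ x ∈ Set.Icc (-(L / 2)) (L / 2),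
      HasDerivWithinAt φ' (φ'' x) (Set.Icc (-(L / 2)) (L / 2)) x)
    (heq : ∀ x ∈ Set.Icc (-(L / 2)) (L / 2), φ'' x = deriv F (φ x))
    (hb1 : φ (-(L / 2)) = 0)
    (h0 : φ' 0 = 0)
    (hpos : ∀ x ∈ Set.Ico (-(L / 2)) (0 : ℝ), 0 < φ' x) :
    (∀ s ∈ Set.Ico (0 : ℝ) (φ 0), F (φ 0) < F s) ∧
    IntegrableOn (fun s => 1 / Real.sqrt (F s - F (φ 0))) (Set.Ioo 0 (φ 0)) ∧
    L = Real.sqrt 2 * ∫ s in Set.Ioo 0 (φ 0), 1 / Real.sqrt (F s - F (φ 0)) := by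
  have hhalf : Icc (-(L / 2)) 0 ⊆ Icc (-(L / 2)) (L / 2) := Icc_subset_Icc_right (by linarith)
  obtain ⟨hgap, hint, hval⟩ := increasing_arc_time_formula (hF.differentiable one_ne_zero)
    (by linarith) (fun x hx => (hd1 x (hhalf hx)).mono hhalf)
    (fun x hx => (hd2 x (hhalf hx)).mono hhalf) (fun x hx => heq x (hhalf hx)) h0 hpos
  rw [hb1] at hgap hint hval
  refine ⟨hgap, hint, ?_⟩
  rw [hval, ← mul_assoc, Real.mul_self_sqrt zero_le_two]
  ring

/-- Length formula for Dirichlet steady states: if `φ` is `C²` on `[−L/2, L/2]`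
with `φ'' = f(φ)` (`f := F'`), zero boundary values, `φ'(0) = 0`, `φ' > 0` on
`[−L/2, 0)`, and `M := φ(0)`, then `F(s) > F(M)` on `[0, M)`, the improper
integral `∫₀^M ds/√(F(s) − F(M))` converges, and
`L = √2 ∫₀^M ds/√(F(s) − F(M))`. -/
theorem length_formula_dirichlet_steady_state
    (F : ℝ → ℝ) (hF : ContDiff ℝ 1 F)
    (L : ℝ) (hL : 0 < L)
    (φ φ' φ'' : ℝ → ℝ)
    (hd1 : ∀ x ∈ Set.Icc (-(L / 2)) (L / 2),
      HasDerivWithinAt φ (φ' x) (Set.Icc (-(L / 2)) (L / 2)) x)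
    (hd2 : ∀ x ∈ Set.Icc (-(L / 2)) (L / 2),
      HasDerivWithinAt φ' (φ'' x) (Set.Icc (-(L / 2)) (L / 2)) x)
    (hcont : ContinuousOn φ'' (Set.Icc (-(L / 2)) (L / 2)))
    (heq : ∀ x ∈ Set.Icc (-(L / 2)) (L / 2), φ'' x = deriv F (φ x))
    (hb1 : φ (-(L / 2)) = 0) (hb2 : φ (L / 2) = 0)
    (h0 : φ' 0 = 0)
    (hpos : ∀ x ∈ Set.Ico (-(L / 2)) (0 : ℝ), 0 < φ' x) :
    (∀ s ∈ Set.Ico (0 : ℝ) (φ 0), F (φ 0) < F s) ∧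
    IntegrableOn (fun s => 1 / Real.sqrt (F s - F (φ 0))) (Set.Ioo 0 (φ 0)) ∧
    L = Real.sqrt 2 * ∫ s in Set.Ioo 0 (φ 0), 1 / Real.sqrt (F s - F (φ 0)) :=
  length_formula_dirichlet_steady_state_general F hF L hL φ φ' φ'' hd1 hd2 heq hb1 h0 hpos
end

section
/- Divergence of the length integral at the well: there exists δ ∈ (0,1) such that for every M ∈ (1−δ, 1) one has F(s) > F(M) for all s ∈ [0, M) and the integral ∫₀^M ds/√(F(s) − F(M)) is finite; moreover ∫₀^M ds/√(F(s) − F(M)) → +∞ as M → 1⁻. -/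
/-! On an interval `[a, 1]` around the well, `F''` is pinched between `m > 0` and `K`. Integrating
twice from `s = 1`, where `F` and `F'` vanish, gives `F(s) ≤ K/2·(1-s)²` and, for
`a ≤ s ≤ M ≤ 1`, `F(s) - F(M) ≥ m(1-M)(M-s)`. The second bound makes the singularity of
`1/√(F s - F M)` at `s = M` integrable (it is of type `(M-s)^{-1/2}`); the first makes the
integrand at least `(K/2)^{-1/2}/(1-s)` on `(a, M)`, whose integral `log((1-a)/(1-M))` diverges
as `M → 1`. On `[0, a]`, `F` is bounded below by a positive constant, which exceeds `F M` once `M`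
is close to `1`. -/

open MeasureTheory Filter Set Real Topology

theorem sub_le_sub_of_hasDerivAt_le {f g f' g' : ℝ → ℝ} {a b : ℝ} (hab : a ≤ b)
    (hf : ∀ x ∈ Icc a b, HasDerivAt f (f' x) x) (hg : ∀ x ∈ Icc a b, HasDerivAt g (g' x) x)
    (h : ∀ x ∈ Ioo a b, f' x ≤ g' x) : f b - f a ≤ g b - g a := by
  have hsub : ∀ x ∈ Icc a b, HasDerivAt (fun y => g y - f y) (g' x - f' x) x :=
    fun x hx => (hg x hx).sub (hf x hx)
  have hmono : MonotoneOn (fun y => g y - f y) (Icc a b) := by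
    refine monotoneOn_of_hasDerivWithinAt_nonneg (f' := fun x => g' x - f' x) (convex_Icc a b)
      (fun x hx => (hsub x hx).continuousAt.continuousWithinAt) ?_ ?_ <;> rw [interior_Icc]
    · exact fun x hx => (hsub x (Ioo_subset_Icc_self hx)).hasDerivWithinAt
    · exact fun x hx => sub_nonneg.mpr (h x hx)
  have := hmono (left_mem_Icc.mpr hab) (right_mem_Icc.mpr hab) hab
  linarith

theorem exists_Ioo_subset_preimage_of_continuousAt {f : ℝ → ℝ} {x l : ℝ} {s : Set ℝ}
    (hl : l < x) (hf : ContinuousAt f x) (hs : s ∈ 𝓝 (f x)) :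
    ∃ a ∈ Ico l x, Ioo a x ⊆ f ⁻¹' s :=
  (mem_nhdsLT_iff_exists_mem_Ico_Ioo_subset hl).mp (nhdsWithin_le_nhds (hf.preimage_mem_nhds hs))

theorem integral_inv_one_sub {a M : ℝ} (haM : a ≤ M) (hM : M < 1) :
    ∫ s in a..M, (1 - s)⁻¹ = log (1 - a) - log (1 - M) := by
  have h0 : (0 : ℝ) ∉ uIcc (1 - M) (1 - a) := by
    rw [uIcc_of_le (by linarith)]
    exact fun h => by linarith [h.1]
  rw [intervalIntegral.integral_comp_sub_left (fun x => x⁻¹) 1, integral_inv h0,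
    log_div (by linarith) (by linarith)]

theorem tendsto_sub_log_one_sub (x : ℝ) :
    Tendsto (fun M => x - log (1 - M)) (𝓝[<] 1) atTop := by
  have h1M : Tendsto (fun M : ℝ => 1 - M) (𝓝[<] 1) (𝓝[>] 0) := by
    refine tendsto_nhdsWithin_of_tendsto_nhds_of_eventually_within _ ?_ ?_
    · exact ((continuous_sub_left 1).tendsto' 1 0 (sub_self 1)).mono_left nhdsWithin_le_nhds
    · filter_upwards [self_mem_nhdsWithin] with M hM using sub_pos.mpr (mem_Iio.mp hM)
  exact tendsto_atTop_add_const_left _ x (tendsto_neg_atTop_iff.mpr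
    (tendsto_log_nhdsGT_zero.comp h1M))

theorem integrableOn_one_div_sqrt_sub (a M : ℝ) :
    IntegrableOn (fun s => 1 / √(M - s)) (Ioc a M) := by
  have h : IntervalIntegrable (fun x : ℝ => x ^ (-(1 / 2) : ℝ)) volume 0 (M - a) :=
    intervalIntegral.intervalIntegrable_rpow' (by norm_num)
  have h' : IntervalIntegrable (fun s => (M - s) ^ (-(1 / 2) : ℝ)) volume a M := by
    simpa using (h.comp_sub_left M).symm
  refine ((intervalIntegrable_iff.mp h').mono_set Ioc_subset_uIoc).congr_fun
    (fun s hs => ?_) measurableSet_Ioc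
  beta_reduce
  rw [rpow_neg (sub_nonneg.mpr hs.2), ← sqrt_eq_rpow, one_div]

theorem integrableOn_one_div_sqrt_sub_sub {F : ℝ → ℝ} (hF : Continuous F) {a b c M : ℝ}
    (hc : 0 < c) (hgap : ∀ s ∈ Icc b a, F M < F s)
    (hlin : ∀ s ∈ Ioo a M, c * (M - s) ≤ F s - F M) :
    IntegrableOn (fun s => 1 / √(F s - F M)) (Ioo b M) := by
  have hleft : IntegrableOn (fun s => 1 / √(F s - F M)) (Icc b a) := by
    refine ContinuousOn.integrableOn_Icc (continuousOn_const.div ?_ fun s hs => ?_)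
    · exact (hF.sub continuous_const).sqrt.continuousOn
    · exact (sqrt_pos.mpr (sub_pos.mpr (hgap s hs))).ne'
  have hright : IntegrableOn (fun s => 1 / √(F s - F M)) (Ioo a M) := by
    refine (((integrableOn_one_div_sqrt_sub a M).mono_set Ioo_subset_Ioc_self).const_mul
      (1 / √c)).mono' ?_ ?_
    · exact ((hF.sub continuous_const).sqrt.measurable.const_div 1).aestronglyMeasurable
    · refine (ae_restrict_iff' measurableSet_Ioo).mpr (ae_of_all _ fun s hs => ?_)
      have hMs : 0 < M - s := sub_pos.mpr hs.2
      rw [norm_of_nonneg (by positivity), one_div_mul_one_div, ← sqrt_mul hc.le]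
      exact one_div_le_one_div_of_le (by positivity) (sqrt_le_sqrt (hlin s hs))
  refine (hleft.union hright).mono_set fun s hs => ?_
  rcases le_or_gt s a with hsa | has
  · exact Or.inl ⟨hs.1.le, hsa⟩
  · exact Or.inr ⟨has, hs.2⟩

theorem inv_sqrt_mul_log_le_integral {F : ℝ → ℝ} {a b C M : ℝ} (hC : 0 < C) (hba : b ≤ a)
    (haM : a ≤ M) (hM : M < 1) (hint : IntegrableOn (fun s => 1 / √(F s - F M)) (Ioo b M))
    (hpos : ∀ s ∈ Ioo a M, F M < F s) (hup : ∀ s ∈ Ioo a M, F s - F M ≤ C * (1 - s) ^ 2) :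
    (√C)⁻¹ * (log (1 - a) - log (1 - M)) ≤ ∫ s in Ioo b M, 1 / √(F s - F M) := by
  have hcont : ContinuousOn (fun s => (√C)⁻¹ * (1 - s)⁻¹) (Icc a M) :=
    continuousOn_const.mul ((continuous_sub_left 1).continuousOn.inv₀ fun s hs =>
      (sub_pos.mpr (hs.2.trans_lt hM)).ne')
  calc (√C)⁻¹ * (log (1 - a) - log (1 - M))
        = ∫ s in Ioo a M, (√C)⁻¹ * (1 - s)⁻¹ := by
        rw [← integral_Ioc_eq_integral_Ioo, ← intervalIntegral.integral_of_le haM,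
          intervalIntegral.integral_const_mul, integral_inv_one_sub haM hM]
    _ ≤ ∫ s in Ioo a M, 1 / √(F s - F M) := by
      refine setIntegral_mono_on (hcont.integrableOn_Icc.mono_set Ioo_subset_Icc_self)
        (hint.mono_set (Ioo_subset_Ioo_left hba)) measurableSet_Ioo fun s hs => ?_
      have h1s : 0 < 1 - s := by linarith [hs.2]
      rw [← mul_inv, ← sqrt_sq h1s.le, ← sqrt_mul hC.le, ← one_div]
      exact one_div_le_one_div_of_le (sqrt_pos.mpr (sub_pos.mpr (hpos s hs)))
        (sqrt_le_sqrt (hup s hs))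
    _ ≤ ∫ s in Ioo b M, 1 / √(F s - F M) :=
      setIntegral_mono_set hint (ae_of_all _ fun s => by positivity)
        (Ioo_subset_Ioo_left hba).eventuallyLE

section Well

variable {F : ℝ → ℝ} {a m K : ℝ}

theorem mul_one_sub_le_neg_deriv (hF' : Differentiable ℝ (deriv F)) (h2 : deriv F 1 = 0)
    (hm : ∀ t ∈ Ioo a 1, m ≤ deriv (deriv F) t) {t : ℝ} (ht : t ∈ Icc a 1) :
    m * (1 - t) ≤ -deriv F t := by
  have := sub_le_sub_of_hasDerivAt_le ht.2 (fun x _ => hasDerivAt_mul_const m)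
    (fun x _ => (hF' x).hasDerivAt) fun x hx =>
      hm x ⟨ht.1.trans_lt hx.1, hx.2⟩
  rw [h2] at this
  linarith

theorem neg_deriv_le_mul_one_sub (hF' : Differentiable ℝ (deriv F)) (h2 : deriv F 1 = 0)
    (hK : ∀ t ∈ Ioo a 1, deriv (deriv F) t ≤ K) {t : ℝ} (ht : t ∈ Icc a 1) :
    -deriv F t ≤ K * (1 - t) := by
  have := sub_le_sub_of_hasDerivAt_le ht.2 (fun x _ => (hF' x).hasDerivAt)
    (fun x _ => hasDerivAt_mul_const K) fun x hx =>
      hK x ⟨ht.1.trans_lt hx.1, hx.2⟩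
  rw [h2] at this
  linarith

theorem le_half_mul_one_sub_sq (hF : Differentiable ℝ F) (hF' : Differentiable ℝ (deriv F))
    (h1 : F 1 = 0) (h2 : deriv F 1 = 0) (hK : ∀ t ∈ Ioo a 1, deriv (deriv F) t ≤ K) {s : ℝ}
    (hs : s ∈ Icc a 1) : F s ≤ K / 2 * (1 - s) ^ 2 := by
  have hq : ∀ x, HasDerivAt (fun y => K / 2 * (1 - y) ^ 2) (-(K * (1 - x))) x := fun x =>
    ((((hasDerivAt_id' x).const_sub 1).pow 2).const_mul (K / 2)).congr_deriv (by ring)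
  have := sub_le_sub_of_hasDerivAt_le hs.2 (fun x _ => hq x) (fun x _ => (hF x).hasDerivAt)
    fun x hx => by linarith [neg_deriv_le_mul_one_sub hF' h2 hK ⟨hs.1.trans hx.1.le, hx.2.le⟩]
  rw [h1] at this
  linarith

theorem strictAntiOn_Icc_of_deriv_deriv_pos (hF : Differentiable ℝ F)
    (hF' : Differentiable ℝ (deriv F)) (h2 : deriv F 1 = 0)
    (hpos : ∀ t ∈ Ioo a 1, 0 < deriv (deriv F) t) : StrictAntiOn F (Icc a 1) := by
  have hmono : StrictMonoOn (deriv F) (Icc a 1) :=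
    strictMonoOn_of_deriv_pos (convex_Icc a 1) hF'.continuous.continuousOn
      (by rwa [interior_Icc])
  refine strictAntiOn_of_deriv_neg (convex_Icc a 1) hF.continuous.continuousOn fun t ht => ?_
  rw [interior_Icc] at ht
  rw [← h2]
  exact hmono ⟨ht.1.le, ht.2.le⟩ ⟨(ht.1.trans ht.2).le, le_rfl⟩ ht.2

theorem mul_sub_le_sub_of_le (hF : Differentiable ℝ F) (hF' : Differentiable ℝ (deriv F))
    (h2 : deriv F 1 = 0) (hm : ∀ t ∈ Ioo a 1, m ≤ deriv (deriv F) t) (hm0 : 0 ≤ m)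
    {s M : ℝ} (has : a ≤ s) (hsM : s ≤ M) (hM : M ≤ 1) :
    m * (1 - M) * (M - s) ≤ F s - F M := by
  have := sub_le_sub_of_hasDerivAt_le hsM (fun x _ => (hF x).hasDerivAt)
    (fun x _ => hasDerivAt_mul_const (-(m * (1 - M)))) fun x hx => by
      have hx' := mul_one_sub_le_neg_deriv hF' h2 hm ⟨has.trans hx.1.le, hx.2.le.trans hM⟩
      have hMx : m * (1 - M) ≤ m * (1 - x) := mul_le_mul_of_nonneg_left (by linarith [hx.2]) hm0
      linarith
  linarith

end Well

/-- Divergence of the length integral at the well: there is `δ ∈ (0,1)` such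
that for every `M ∈ (1−δ, 1)` one has `F(s) > F(M)` for `s ∈ [0, M)` and the
integral `∫₀^M ds/√(F(s) − F(M))` is finite; moreover this integral tends to
`+∞` as `M → 1⁻`. -/
theorem length_integral_diverges_at_well
    (F : ℝ → ℝ) (hF : ContDiff ℝ 2 F)
    (h1 : F 1 = 0) (h2 : deriv F 1 = 0) (h3 : 0 < deriv (deriv F) 1)
    (h4 : ∀ s ∈ Set.Ico (0 : ℝ) 1, 0 < F s) :
    ∃ δ ∈ Set.Ioo (0 : ℝ) 1,
      (∀ M ∈ Set.Ioo (1 - δ) 1,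
        (∀ s ∈ Set.Ico (0 : ℝ) M, F M < F s) ∧
        IntegrableOn (fun s => 1 / Real.sqrt (F s - F M)) (Set.Ioo 0 M)) ∧
      Tendsto (fun M => ∫ s in Set.Ioo (0 : ℝ) M, 1 / Real.sqrt (F s - F M))
        (nhdsWithin 1 (Set.Iio 1)) atTop := by
  obtain ⟨hFd, -, hF'⟩ := contDiff_succ_iff_deriv.mp (show ContDiff ℝ (1 + 1) F from hF)
  have hF'd : Differentiable ℝ (deriv F) := hF'.differentiable one_ne_zero
  set c := deriv (deriv F) 1
  obtain ⟨a, ha, hF''⟩ : ∃ a ∈ Ico (1 / 2 : ℝ) 1,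
      Ioo a 1 ⊆ deriv (deriv F) ⁻¹' Ioo (c / 2) (2 * c) :=
    exists_Ioo_subset_preimage_of_continuousAt (by norm_num)
      (hF'.continuous_deriv le_rfl).continuousAt (Ioo_mem_nhds (by linarith) (by linarith))
  have hm : ∀ t ∈ Ioo a 1, c / 2 ≤ deriv (deriv F) t := fun t ht => (hF'' ht).1.le
  have hK : ∀ t ∈ Ioo a 1, deriv (deriv F) t ≤ 2 * c := fun t ht => (hF'' ht).2.le
  have ha0 : 0 < a := by linarith [ha.1]
  obtain ⟨x₀, hx₀, hmin⟩ := (isCompact_Icc (a := 0) (b := a)).exists_isMinOn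
    (nonempty_Icc.mpr ha0.le) hFd.continuous.continuousOn
  obtain ⟨b, hb, hFb⟩ : ∃ b ∈ Ico a 1, Ioo b 1 ⊆ F ⁻¹' Iio (F x₀) :=
    exists_Ioo_subset_preimage_of_continuousAt ha.2 hFd.continuous.continuousAt
      (Iio_mem_nhds (h1 ▸ h4 x₀ ⟨hx₀.1, hx₀.2.trans_lt ha.2⟩))
  have hgap : ∀ M ∈ Ioo b 1, ∀ s ∈ Ico 0 M, F M < F s := fun M hM s hs =>
    (le_or_gt s a).elim (fun hsa => (hFb hM).trans_le (hmin ⟨hs.1, hsa⟩)) fun has =>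
      strictAntiOn_Icc_of_deriv_deriv_pos hFd hF'd h2 (fun t ht => (half_pos h3).trans_le (hm t ht))
        ⟨has.le, (hs.2.trans hM.2).le⟩ ⟨hb.1.trans hM.1.le, hM.2.le⟩ hs.2
  have hint : ∀ M ∈ Ioo b 1, IntegrableOn (fun s => 1 / √(F s - F M)) (Ioo 0 M) :=
    fun M hM => integrableOn_one_div_sqrt_sub_sub hFd.continuous
      (mul_pos (half_pos h3) (sub_pos.mpr hM.2))
      (fun s hs => hgap M hM s ⟨hs.1, hs.2.trans_lt (hb.1.trans_lt hM.1)⟩) fun s hs =>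
        mul_sub_le_sub_of_le hFd hF'd h2 hm (half_pos h3).le hs.1.le hs.2.le hM.2.le
  refine ⟨1 - b, ⟨by linarith [hb.2], by linarith [hb.1]⟩, fun M hM => ?_, ?_⟩
  · rw [sub_sub_cancel] at hM
    exact ⟨hgap M hM, hint M hM⟩
  refine tendsto_atTop_mono' _ ?_ ((tendsto_sub_log_one_sub (log (1 - a))).const_mul_atTop
    (inv_pos.mpr (sqrt_pos.mpr h3)))
  filter_upwards [Ioo_mem_nhdsLT hb.2] with M hM
  refine inv_sqrt_mul_log_le_integral h3 ha0.le (hb.1.trans hM.1.le) hM.2 (hint M hM)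
    (fun s hs => hgap M hM s ⟨ha0.le.trans hs.1.le, hs.2⟩) fun s hs => ?_
  linarith [le_half_mul_one_sub_sq hFd hF'd h1 h2 hK ⟨hs.1.le, hs.2.le.trans hM.2.le⟩,
    h4 M ⟨by linarith [hb.1, hM.1], hM.2⟩]
end

section
/- Varah bound for strictly diagonally dominant matrices: let A be an N×N real matrix and m > 0 a constant such that A_{ii} − Σ_{j≠i} |A_{ij}| ≥ m for every row index i. Then A is invertible and ‖A⁻¹‖_∞ ≤ 1/m, i.e. |A⁻¹ y|_∞ ≤ |y|_∞ / m for every y ∈ ℝ^N, where |·|_∞ is the maximum norm on ℝ^N and ‖·‖_∞ the operator norm it induces. -/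
lemma varah_key (N : ℕ) (hN : 1 ≤ N)
    (A : Matrix (Fin N) (Fin N) ℝ) (m : ℝ) (hm : 0 < m)
    (hdom : ∀ i : Fin N, m ≤ A i i - ∑ j ∈ Finset.univ.erase i, |A i j|)
    (x : Fin N → ℝ) : m * ‖x‖ ≤ ‖A.mulVec x‖ := by
  haveI : NeZero N := ⟨by omega⟩
  obtain ⟨i, -, hi⟩ := Finset.exists_max_image (Finset.univ : Finset (Fin N))
    (fun i => |x i|) ⟨0, Finset.mem_univ 0⟩
  have hnorm : ‖x‖ = |x i| := by
    apply le_antisymm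
    · apply pi_norm_le_iff_of_nonneg (abs_nonneg _) |>.2
      intro j
      simpa [Real.norm_eq_abs] using hi j (Finset.mem_univ j)
    · simpa [Real.norm_eq_abs] using norm_le_pi_norm x i
  rw [hnorm]
  have hxi : 0 ≤ |x i| := abs_nonneg _
  have hS : ∀ j, |x j| ≤ |x i| := fun j => hi j (Finset.mem_univ j)
  have hAii : 0 < A i i := by
    have := hdom i
    have hs : 0 ≤ ∑ j ∈ Finset.univ.erase i, |A i j| :=
      Finset.sum_nonneg fun j _ => abs_nonneg _
    linarith
  have key : m * |x i| ≤ |(A.mulVec x) i| := by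
    have hsplit : (A.mulVec x) i
        = A i i * x i + ∑ j ∈ Finset.univ.erase i, A i j * x j := by
      rw [Matrix.mulVec, dotProduct]
      rw [← Finset.add_sum_erase _ _ (Finset.mem_univ i)]
    have h1 : |∑ j ∈ Finset.univ.erase i, A i j * x j|
        ≤ (∑ j ∈ Finset.univ.erase i, |A i j|) * |x i| := by
      calc |∑ j ∈ Finset.univ.erase i, A i j * x j|
          ≤ ∑ j ∈ Finset.univ.erase i, |A i j * x j| :=
            Finset.abs_sum_le_sum_abs _ _
        _ ≤ ∑ j ∈ Finset.univ.erase i, |A i j| * |x i| := by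
            apply Finset.sum_le_sum
            intro j _
            rw [abs_mul]
            exact mul_le_mul_of_nonneg_left (hS j) (abs_nonneg _)
        _ = (∑ j ∈ Finset.univ.erase i, |A i j|) * |x i| := by
            rw [Finset.sum_mul]
    have h2 : A i i * |x i| - |∑ j ∈ Finset.univ.erase i, A i j * x j|
        ≤ |(A.mulVec x) i| := by
      rw [hsplit]
      have := abs_add_le (A i i * x i + ∑ j ∈ Finset.univ.erase i, A i j * x j)
        (-(∑ j ∈ Finset.univ.erase i, A i j * x j))
      simp only [add_neg_cancel_right, abs_neg] at this
      have habs : |A i i * x i| = A i i * |x i| := by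
        rw [abs_mul, abs_of_pos hAii]
      linarith
    have h3 : m * |x i|
        ≤ A i i * |x i| - (∑ j ∈ Finset.univ.erase i, |A i j|) * |x i| := by
      have := hdom i
      nlinarith
    linarith
  calc m * |x i| ≤ |(A.mulVec x) i| := key
    _ ≤ ‖A.mulVec x‖ := by
        simpa [Real.norm_eq_abs] using norm_le_pi_norm (A.mulVec x) i

/-- Varah bound for strictly diagonally dominant matrices: if
`A_{ii} − Σ_{j≠i} |A_{ij}| ≥ m > 0` for every row `i`, then `A` is invertible
and `|A⁻¹ y|_∞ ≤ |y|_∞ / m` for every `y ∈ ℝ^N` (here `‖·‖` on `Fin N → ℝ` is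
the maximum norm). -/
theorem varah_bound_diagonally_dominant
    (N : ℕ) (hN : 1 ≤ N)
    (A : Matrix (Fin N) (Fin N) ℝ) (m : ℝ) (hm : 0 < m)
    (hdom : ∀ i : Fin N, m ≤ A i i - ∑ j ∈ Finset.univ.erase i, |A i j|) :
    IsUnit A ∧ ∀ y : Fin N → ℝ, ‖A⁻¹.mulVec y‖ ≤ ‖y‖ / m := by
  have hdet : A.det ≠ 0 := by
    intro h
    obtain ⟨v, hv, hAv⟩ := (Matrix.exists_mulVec_eq_zero_iff).2 h
    have := varah_key N hN A m hm hdom v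
    rw [hAv, norm_zero] at this
    have : ‖v‖ ≤ 0 := by nlinarith [norm_nonneg v]
    exact hv (norm_le_zero_iff.1 this)
  have hunit : IsUnit A := by
    rw [Matrix.isUnit_iff_isUnit_det]
    exact isUnit_iff_ne_zero.2 hdet
  refine ⟨hunit, fun y => ?_⟩
  have hmul : A.mulVec (A⁻¹.mulVec y) = y := by
    rw [Matrix.mulVec_mulVec, Matrix.mul_nonsing_inv A (isUnit_iff_ne_zero.2 hdet), Matrix.one_mulVec]
  have := varah_key N hN A m hm hdom (A⁻¹.mulVec y)
  rw [hmul] at this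
  rw [le_div_iff₀ hm]
  linarith
end

section
/- Negative definiteness of the Hessian of the layer interaction energy: let N ≥ 2 and let ω₁, …, ω_{N+1} be negative real numbers. Define the symmetric tridiagonal N×N real matrix B by B_{11} = 2ω₁ + ω₂, B_{jj} = ω_j + ω_{j+1} for 2 ≤ j ≤ N−1, B_{NN} = ω_N + 2ω_{N+1}, B_{j,j+1} = B_{j+1,j} = −ω_{j+1} for 1 ≤ j ≤ N−1, and all other entries zero. Then for every y ∈ ℝ^N one has Σ_{i,j=1}^N B_{ij} y_i y_j = 2ω₁ y₁² + Σ_{j=2}^N ω_j (y_{j−1} − y_j)² + 2ω_{N+1} y_N², and consequently B is negative definite. -/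
open Finset

lemma quad_sum_nat (N : ℕ) (hN : 2 ≤ N) (ω : ℕ → ℝ) (g : ℕ → ℝ)
    (hg : ∀ n, N ≤ n → g n = 0) :
    ∑ i ∈ range N, ∑ j ∈ range N,
      ((if i = j then
          (if i = 0 then 2 * ω 1 + ω 2
           else if i = N - 1 then ω N + 2 * ω (N + 1)
           else ω (i + 1) + ω (i + 2))
        else if j = i + 1 ∨ i = j + 1 then -ω (Nat.max i j + 1) else 0)
        * g i * g j)
    = 2 * ω 1 * (g 0) ^ 2
      + (∑ i ∈ range (N - 1), ω (i + 2) * (g i - g (i + 1)) ^ 2)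
      + 2 * ω (N + 1) * (g (N - 1)) ^ 2 := by
  classical
  set c : ℕ → ℝ := fun i =>
    (if i = 0 then 2 * ω 1 + ω 2
     else if i = N - 1 then ω N + 2 * ω (N + 1)
     else ω (i + 1) + ω (i + 2)) with hc
  have hsplit : ∀ i j : ℕ,
      (if i = j then c i
       else if j = i + 1 ∨ i = j + 1 then -ω (Nat.max i j + 1) else 0)
      = (if j = i then c i else 0) + (if j = i + 1 then -ω (i + 2) else 0)
        + (if i = j + 1 then -ω (j + 2) else 0) := by
    intro i j
    rcases eq_or_ne i j with h | h
    · subst h; simp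
    · rcases eq_or_ne j (i+1) with h1 | h1
      · subst h1
        have hm : Nat.max i (i+1) = i + 1 := Nat.max_eq_right (Nat.le_succ i)
        simp [h, hm, Ne.symm h]
        intro h2; exact absurd h2 (by omega)
      · rcases eq_or_ne i (j+1) with h2 | h2
        · subst h2
          have hm : Nat.max (j+1) j = j + 1 := Nat.max_eq_left (Nat.le_succ j)
          simp [h, h1, hm, Ne.symm h]
        · simp [h, h1, h2, Ne.symm h]
  have hrw : ∑ i ∈ range N, ∑ j ∈ range N,
      ((if i = j then c i
        else if j = i + 1 ∨ i = j + 1 then -ω (Nat.max i j + 1) else 0) * g i * g j)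
      = ∑ i ∈ range N, ∑ j ∈ range N,
        ((if j = i then c i * g i * g j else 0)
          + ((if j = i + 1 then -ω (i + 2) * g i * g j else 0)
          + (if i = j + 1 then -ω (j + 2) * g i * g j else 0))) := by
    refine Finset.sum_congr rfl fun i _ => Finset.sum_congr rfl fun j _ => ?_
    rw [hsplit i j]
    simp only [add_mul, ite_mul, zero_mul]
    ring
  rw [hrw]
  simp only [Finset.sum_add_distrib]
  have hS1 : ∑ i ∈ range N, ∑ j ∈ range N, (if j = i then c i * g i * g j else 0)
      = ∑ i ∈ range N, c i * g i * g i := by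
    refine Finset.sum_congr rfl fun i hi => ?_
    rw [Finset.sum_ite_eq' (range N) i]
    simp [Finset.mem_range.mp hi]
  have hS2 : ∑ i ∈ range N, ∑ j ∈ range N, (if j = i + 1 then -ω (i + 2) * g i * g j else 0)
      = ∑ i ∈ range N, -ω (i + 2) * g i * g (i + 1) := by
    refine Finset.sum_congr rfl fun i hi => ?_
    rw [Finset.sum_ite_eq' (range N) (i+1)]
    by_cases h : i + 1 ∈ range N
    · simp [h]
    · have hz : g (i+1) = 0 := hg _ (by simp at h; omega)
      simp [h, hz]
  have hS3 : ∑ i ∈ range N, ∑ j ∈ range N, (if i = j + 1 then -ω (j + 2) * g i * g j else 0)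
      = ∑ j ∈ range N, -ω (j + 2) * g (j+1) * g j := by
    rw [Finset.sum_comm]
    refine Finset.sum_congr rfl fun j hj => ?_
    rw [Finset.sum_ite_eq' (range N) (j+1)]
    by_cases h : j + 1 ∈ range N
    · simp [h]
    · have hz : g (j+1) = 0 := hg _ (by simp at h; omega)
      simp [h, hz]
  rw [hS1, hS2, hS3]
  have hcs : ∀ i ∈ range N, c i * g i * g i =
      (ω (i+1) * g i * g i + ω (i+2) * g i * g i)
      + ((if i = 0 then ω 1 * g i * g i else 0)
      + (if i = N - 1 then ω (N+1) * g i * g i else 0)) := by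
    intro i hi
    rw [hc]
    rcases eq_or_ne i 0 with h0 | h0
    · subst h0
      have h1 : (0:ℕ) ≠ N - 1 := by omega
      simp [h1]; ring
    · rcases eq_or_ne i (N-1) with h1 | h1
      · subst h1
        have e1 : N - 1 + 1 = N := by omega
        have e2 : N - 1 + 2 = N + 1 := by omega
        simp [h0, e1, e2]; ring
      · simp [h0, h1]; ring
  have hdiag : ∑ i ∈ range N, c i * g i * g i
      = (∑ i ∈ range N, (ω (i+1) * g i * g i + ω (i+2) * g i * g i))
        + (ω 1 * g 0 * g 0 + ω (N+1) * g (N-1) * g (N-1)) := by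
    rw [Finset.sum_congr rfl hcs]
    simp only [Finset.sum_add_distrib]
    rw [Finset.sum_ite_eq' (range N) 0 (fun a => ω 1 * g a * g a),
        Finset.sum_ite_eq' (range N) (N-1) (fun a => ω (N+1) * g a * g a)]
    have h0 : (0:ℕ) ∈ range N := by simp; omega
    have h1 : N - 1 ∈ range N := by simp; omega
    rw [if_pos h0, if_pos h1]
  rw [hdiag, Finset.sum_add_distrib]
  obtain ⟨M, rfl⟩ : ∃ M, N = M + 1 := ⟨N - 1, by omega⟩
  have hM : 1 ≤ M := by omega
  simp only [Nat.add_sub_cancel]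
  have p1 : ∑ i ∈ range (M+1), ω (i+1) * g i * g i
      = (∑ i ∈ range M, ω (i+2) * g (i+1) * g (i+1)) + ω 1 * g 0 * g 0 := by
    rw [Finset.sum_range_succ' (fun i => ω (i+1) * g i * g i) M]
  have p2 : ∑ i ∈ range (M+1), ω (i+2) * g i * g i
      = (∑ i ∈ range M, ω (i+2) * g i * g i) + ω (M+2) * g M * g M :=
    Finset.sum_range_succ _ M
  have p3 : ∑ i ∈ range (M+1), -ω (i+2) * g i * g (i+1)
      = ∑ i ∈ range M, -ω (i+2) * g i * g (i+1) := by
    rw [Finset.sum_range_succ]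
    have hz : g (M+1) = 0 := hg _ le_rfl
    simp [hz]
  have p4 : ∑ j ∈ range (M+1), -ω (j+2) * g (j+1) * g j
      = ∑ j ∈ range M, -ω (j+2) * g (j+1) * g j := by
    rw [Finset.sum_range_succ]
    have hz : g (M+1) = 0 := hg _ le_rfl
    simp [hz]
  rw [p1, p2, p3, p4]
  have hexp : ∑ i ∈ range M, ω (i + 2) * (g i - g (i + 1)) ^ 2
      = ∑ i ∈ range M, (ω (i+2) * g i * g i + ω (i+2) * g (i+1) * g (i+1)
          + (-ω (i+2) * g i * g (i+1) + -ω (i+2) * g (i+1) * g i)) :=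
    Finset.sum_congr rfl fun i _ => by ring
  rw [hexp]
  simp only [Finset.sum_add_distrib]
  have hcomm : ∑ i ∈ range M, -ω (i+2) * g (i+1) * g i
      = ∑ i ∈ range M, -ω (i+2) * g i * g (i+1) :=
    Finset.sum_congr rfl fun i _ => by ring
  rw [hcomm]
  ring


/-- Negative definiteness of the Hessian of the layer interaction energy:
with `ω₁, …, ω_{N+1} < 0` and `B` the symmetric tridiagonal matrix with
`B_{11} = 2ω₁ + ω₂`, `B_{jj} = ω_j + ω_{j+1}` (`2 ≤ j ≤ N−1`),
`B_{NN} = ω_N + 2ω_{N+1}`, `B_{j,j+1} = B_{j+1,j} = −ω_{j+1}`, one has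
`yᵀBy = 2ω₁ y₁² + Σ_{j=2}^N ω_j (y_{j−1} − y_j)² + 2ω_{N+1} y_N²` for all
`y ∈ ℝ^N`, hence `B` is negative definite.  (Indices of `B` and `y` are
`1`-based in the informal statement; row `i : Fin N` corresponds to index
`i.val + 1`.) -/
theorem hessian_layer_energy_negative_definite
    (N : ℕ) (hN : 2 ≤ N)
    (ω : ℕ → ℝ) (hω : ∀ j : ℕ, 1 ≤ j → j ≤ N + 1 → ω j < 0)
    (B : Matrix (Fin N) (Fin N) ℝ)
    (hB : ∀ i j : Fin N, B i j =
      if i = j then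
        (if i.val = 0 then 2 * ω 1 + ω 2
         else if i.val = N - 1 then ω N + 2 * ω (N + 1)
         else ω (i.val + 1) + ω (i.val + 2))
      else if j.val = i.val + 1 ∨ i.val = j.val + 1 then
        -ω (Nat.max i.val j.val + 1)
      else 0) :
    (∀ y : Fin N → ℝ,
      ∑ i : Fin N, ∑ j : Fin N, B i j * y i * y j =
        2 * ω 1 * (y ⟨0, by omega⟩) ^ 2 +
        (∑ j ∈ Finset.Icc 2 N, ω j *
          ((if h : j - 2 < N then y ⟨j - 2, h⟩ else 0) -
           (if h : j - 1 < N then y ⟨j - 1, h⟩ else 0)) ^ 2) +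
        2 * ω (N + 1) * (y ⟨N - 1, by omega⟩) ^ 2) ∧
    (∀ y : Fin N → ℝ, y ≠ 0 →
      ∑ i : Fin N, ∑ j : Fin N, B i j * y i * y j < 0) := by
  classical
  have key : ∀ y : Fin N → ℝ,
      ∑ i : Fin N, ∑ j : Fin N, B i j * y i * y j =
        2 * ω 1 * (y ⟨0, by omega⟩) ^ 2 +
        (∑ j ∈ Finset.Icc 2 N, ω j *
          ((if h : j - 2 < N then y ⟨j - 2, h⟩ else 0) -
           (if h : j - 1 < N then y ⟨j - 1, h⟩ else 0)) ^ 2) +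
        2 * ω (N + 1) * (y ⟨N - 1, by omega⟩) ^ 2 := by
    intro y
    set g : ℕ → ℝ := fun n => if h : n < N then y ⟨n, h⟩ else 0 with hgdef
    have hg : ∀ n, N ≤ n → g n = 0 := fun n hn => dif_neg (by omega)
    have hgn : ∀ n (h : n < N), g n = y ⟨n, h⟩ := fun n h => dif_pos h
    have hL : ∑ i : Fin N, ∑ j : Fin N, B i j * y i * y j
        = ∑ i ∈ Finset.range N, ∑ j ∈ Finset.range N,
          ((if i = j then
              (if i = 0 then 2 * ω 1 + ω 2
               else if i = N - 1 then ω N + 2 * ω (N + 1)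
               else ω (i + 1) + ω (i + 2))
            else if j = i + 1 ∨ i = j + 1 then -ω (Nat.max i j + 1) else 0)
            * g i * g j) := by
      rw [← Fin.sum_univ_eq_sum_range (fun i => ∑ j ∈ Finset.range N,
        ((if i = j then
            (if i = 0 then 2 * ω 1 + ω 2
             else if i = N - 1 then ω N + 2 * ω (N + 1)
             else ω (i + 1) + ω (i + 2))
          else if j = i + 1 ∨ i = j + 1 then -ω (Nat.max i j + 1) else 0)
          * g i * g j)) N]
      refine Finset.sum_congr rfl fun i _ => ?_
      rw [← Fin.sum_univ_eq_sum_range (fun j =>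
        ((if (i : ℕ) = j then
            (if (i : ℕ) = 0 then 2 * ω 1 + ω 2
             else if (i : ℕ) = N - 1 then ω N + 2 * ω (N + 1)
             else ω ((i : ℕ) + 1) + ω ((i : ℕ) + 2))
          else if j = (i : ℕ) + 1 ∨ (i : ℕ) = j + 1 then -ω (Nat.max (i : ℕ) j + 1) else 0)
          * g (i : ℕ) * g j)) N]
      refine Finset.sum_congr rfl fun j _ => ?_
      rw [hB i j, hgn _ i.isLt, hgn _ j.isLt]
      simp only [Fin.ext_iff, Fin.eta]
    rw [hL, quad_sum_nat N hN ω g hg]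
    congr 1
    · congr 1
      · rw [hgn 0 (by omega)]
      · rw [← Finset.Ico_add_one_right_eq_Icc, Finset.sum_Ico_eq_sum_range]
        have hr : N + 1 - 2 = N - 1 := by omega
        rw [hr]
        refine Finset.sum_congr rfl fun i hi => ?_
        have hiN : i < N - 1 := Finset.mem_range.mp hi
        rw [show 2 + i = i + 2 from by omega,
            show i + 2 - 2 = i from by omega,
            show i + 2 - 1 = i + 1 from by omega,
            dif_pos (show i < N by omega), dif_pos (show i + 1 < N by omega),
            hgn i (by omega), hgn (i + 1) (by omega)]
    · rw [hgn (N - 1) (by omega)]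
  refine ⟨key, fun y hy => ?_⟩
  rw [key y]
  have hsum_le : ∀ j ∈ Finset.Icc 2 N, ω j *
      ((if h : j - 2 < N then y ⟨j - 2, h⟩ else 0) -
       (if h : j - 1 < N then y ⟨j - 1, h⟩ else 0)) ^ 2 ≤ 0 := by
    intro j hj
    rw [Finset.mem_Icc] at hj
    exact mul_nonpos_iff.mpr (Or.inr ⟨(hω j (by omega) (by omega)).le, sq_nonneg _⟩)
  have hA_le : 2 * ω 1 * (y ⟨0, by omega⟩) ^ 2 ≤ 0 := by
    have := hω 1 (by omega) (by omega)
    nlinarith [sq_nonneg (y ⟨0, by omega⟩)]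
  have hC_le : 2 * ω (N + 1) * (y ⟨N - 1, by omega⟩) ^ 2 ≤ 0 := by
    have := hω (N + 1) (by omega) (by omega)
    nlinarith [sq_nonneg (y ⟨N - 1, by omega⟩)]
  have hS_le : (∑ j ∈ Finset.Icc 2 N, ω j *
      ((if h : j - 2 < N then y ⟨j - 2, h⟩ else 0) -
       (if h : j - 1 < N then y ⟨j - 1, h⟩ else 0)) ^ 2) ≤ 0 :=
    Finset.sum_nonpos hsum_le
  by_cases h0 : y ⟨0, by omega⟩ = 0
  · -- find minimal nonzero index
    have hex : ∃ n, ∃ h : n < N, y ⟨n, h⟩ ≠ 0 := by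
      obtain ⟨i, hi⟩ := Function.ne_iff.mp hy
      exact ⟨i.val, i.isLt, by simpa using hi⟩
    obtain ⟨hkN, hyk⟩ := Nat.find_spec hex
    set k := Nat.find hex with hk
    have hk1 : 1 ≤ k := by
      by_contra h
      push_neg at h
      apply hyk
      have hkeq : (⟨k, hkN⟩ : Fin N) = ⟨0, by omega⟩ := by
        simp only [Fin.mk.injEq]; omega
      rw [hkeq]; exact h0
    have hprev : y ⟨k - 1, by omega⟩ = 0 := by
      by_contra hne
      exact absurd ⟨by omega, hne⟩ (Nat.find_min hex (show k - 1 < k by omega))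
    have hmem : k + 1 ∈ Finset.Icc 2 N := Finset.mem_Icc.mpr ⟨by omega, by omega⟩
    have hterm : ω (k + 1) *
        ((if h : k + 1 - 2 < N then y ⟨k + 1 - 2, h⟩ else 0) -
         (if h : k + 1 - 1 < N then y ⟨k + 1 - 1, h⟩ else 0)) ^ 2 < 0 := by
      have e1 : k + 1 - 2 = k - 1 := by omega
      have e2 : k + 1 - 1 = k := by omega
      rw [e1, e2, dif_pos (show k - 1 < N by omega), dif_pos hkN, hprev]
      have hω' := hω (k + 1) (by omega) (by omega)
      have hsq : 0 < (0 - y ⟨k, hkN⟩) ^ 2 := by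
        have : (0 : ℝ) - y ⟨k, hkN⟩ ≠ 0 := by simpa using hyk
        positivity
      nlinarith
    have hS_lt : (∑ j ∈ Finset.Icc 2 N, ω j *
        ((if h : j - 2 < N then y ⟨j - 2, h⟩ else 0) -
         (if h : j - 1 < N then y ⟨j - 1, h⟩ else 0)) ^ 2) < 0 := by
      calc (∑ j ∈ Finset.Icc 2 N, ω j *
          ((if h : j - 2 < N then y ⟨j - 2, h⟩ else 0) -
           (if h : j - 1 < N then y ⟨j - 1, h⟩ else 0)) ^ 2)
          < ∑ _j ∈ Finset.Icc 2 N, (0 : ℝ) :=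
            Finset.sum_lt_sum hsum_le ⟨k + 1, hmem, hterm⟩
        _ = 0 := by simp
    linarith
  · have hA_lt : 2 * ω 1 * (y ⟨0, by omega⟩) ^ 2 < 0 := by
      have hω' := hω 1 (by omega) (by omega)
      have hsq : 0 < (y ⟨0, by omega⟩) ^ 2 := by positivity
      nlinarith
    linarith
end

section
/- Hyperbolicity of the equilibrium of the reduced layer dynamics: let B be symmetric negative definite and γ, τ > 0. Then every complex eigenvalue of J is real and nonzero; the eigenvalues of J are exactly the numbers (−γ + √(γ² + 4τμ²))/(2τ) > 0 and (−γ − √(γ² + 4τμ²))/(2τ) < 0, where −μ² (with μ > 0) ranges over the eigenvalues of B; and, counted with multiplicity, the characteristic polynomial of J has exactly N positive real roots and N negative real roots. -/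
/-!
A Schur complement with respect to the scalar lower-right block shows that the characteristic
polynomial of `J` is that of `-(1/τ) • B` composed with `x (x + γ/τ)`. So every eigenvalue
`-μ²` of `B` contributes the two roots of `τ x² + γ x - μ²`. Their discriminant is positive
and their product `-μ²/τ` is negative, so one root is positive and the other negative.
-/

open Matrix Polynomial

namespace Matrix

variable {n R : Type*} [Fintype n] [DecidableEq n] [CommRing R]

theorem det_fromBlocks_of_commute {A B C D : Matrix n n R} (hCD : Commute C D)
    (hD : IsRightRegular D.det) : (fromBlocks A B C D).det = (A * D - B * C).det := by
  have h : fromBlocks A B C D * fromBlocks D 0 (-C) 1 = fromBlocks (A * D - B * C) B 0 D := by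
    rw [fromBlocks_multiply]
    simp [hCD.eq, sub_eq_add_neg]
  have hdet := congrArg det h
  rw [det_mul, det_fromBlocks_zero₁₂, det_fromBlocks_zero₂₁, det_one, mul_one] at hdet
  exact hD hdet

theorem charpoly_fromBlocks_zero_one_smul_one (A : Matrix n n R) (c : R) :
    (fromBlocks 0 1 A (c • 1)).charpoly = A.charpoly.comp (X * (X - C c)) := by
  have hJ : charmatrix (fromBlocks 0 1 A (c • 1)) =
      fromBlocks (scalar n X) (-1) (-A.map C) (scalar n (X - C c)) := by
    ext (i | i) (j | j) <;> by_cases h : i = j <;> simp [h]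
  have hcomp : (compRingHom (X * (X - C c))).mapMatrix (charmatrix A) =
      scalar n (X * (X - C c)) - A.map C := by
    ext i j; by_cases h : i = j <;> simp [h]
  rw [charpoly, hJ, det_fromBlocks_of_commute ((scalar_commute _ (Commute.all _) _).symm)
      (by simpa using ((monic_X_sub_C c).pow _).isRegular.right),
    charpoly, ← coe_compRingHom_apply, RingHom.map_det, hcomp]
  simp

theorem IsHermitian.charpoly_smul {𝕜 : Type*} [RCLike 𝕜] {A : Matrix n n 𝕜}
    (hA : A.IsHermitian) (r : ℝ) :
    (r • A).charpoly = ∏ i, (X - C ((r * hA.eigenvalues i : ℝ) : 𝕜)) := by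
  rw [RCLike.real_smul_eq_coe_smul (K := 𝕜)]
  conv_lhs => rw [hA.spectral_theorem, ← map_smul, Unitary.conjStarAlgAut_apply,
    charpoly_mul_comm, ← mul_assoc]
  simp [← diagonal_smul, charpoly_diagonal]

theorem IsHermitian.hasEigenvalue_toLin'_iff {A : Matrix n n ℝ} (hA : A.IsHermitian) (x : ℝ) :
    Module.End.HasEigenvalue A.toLin' x ↔ ∃ i, hA.eigenvalues i = x := by
  rw [Module.End.hasEigenvalue_iff_mem_spectrum, spectrum_toLin',
    hA.spectrum_real_eq_range_eigenvalues, Set.mem_range]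

theorem IsHermitian.eigenvalues_neg {A : Matrix n n ℝ} (hA : A.IsHermitian)
    (hneg : ∀ y : n → ℝ, y ≠ 0 → y ⬝ᵥ A *ᵥ y < 0) (i : n) :
    hA.eigenvalues i < 0 := by
  have hv : (hA.eigenvectorBasis i : n → ℝ) ≠ 0 := fun h =>
    hA.eigenvectorBasis.orthonormal.ne_zero i (by ext j; exact congrFun h j)
  simpa [hA.eigenvalues_eq i] using hneg _ hv

end Matrix

namespace Polynomial

variable {ι : Type*} [Fintype ι]

theorem isRoot_prod_mul_X_sub_C_iff {K : Type*} [Field K] (a b : ι → K) (z : K) :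
    (∏ i, (X - C (a i)) * (X - C (b i))).IsRoot z ↔ ∃ i, z = a i ∨ z = b i := by
  simp [IsRoot, eval_prod, Finset.prod_eq_zero_iff, sub_eq_zero]

theorem card_filter_roots_prod_mul_X_sub_C {K : Type*} [Field K] (a b : ι → K)
    (P : K → Prop) [DecidablePred P] (ha : ∀ i, P (a i)) (hb : ∀ i, ¬ P (b i)) :
    ((∏ i, (X - C (a i)) * (X - C (b i))).roots.filter P).card = Fintype.card ι := by
  rw [Finset.prod_mul_distrib, roots_mul, roots_prod, roots_prod]
  · simp [Multiset.filter_add, ha, hb, Multiset.filter_eq_self.2, Multiset.filter_eq_nil.2]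
  all_goals simp [Finset.prod_ne_zero_iff, X_sub_C_ne_zero]

end Polynomial

theorem Real.abs_lt_sqrt {x y : ℝ} (h : x ^ 2 < y) : |x| < Real.sqrt y := by
  rw [← Real.sqrt_sq_eq_abs]
  exact Real.sqrt_lt_sqrt (sq_nonneg x) h

-- The two roots of `τ x² + γ x - m`.
noncomputable def quadRootAdd (γ τ m : ℝ) : ℝ :=
  (-γ + Real.sqrt (γ ^ 2 + 4 * τ * m)) / (2 * τ)

noncomputable def quadRootSub (γ τ m : ℝ) : ℝ :=
  (-γ - Real.sqrt (γ ^ 2 + 4 * τ * m)) / (2 * τ)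

section QuadRoots

variable {γ τ m : ℝ}

theorem quadRootAdd_pos (hτ : 0 < τ) (hm : 0 < m) : 0 < quadRootAdd γ τ m := by
  have h := abs_lt.1 (Real.abs_lt_sqrt (x := γ) (y := γ ^ 2 + 4 * τ * m) (by nlinarith))
  exact div_pos (by linarith [h.2]) (by positivity)

theorem quadRootSub_neg (hτ : 0 < τ) (hm : 0 < m) : quadRootSub γ τ m < 0 := by
  have h := abs_lt.1 (Real.abs_lt_sqrt (x := γ) (y := γ ^ 2 + 4 * τ * m) (by nlinarith))
  exact div_neg_of_neg_of_pos (by linarith [h.1]) (by positivity)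

theorem X_sub_C_quadRootAdd_mul (hτ : τ ≠ 0) (hd : 0 ≤ γ ^ 2 + 4 * τ * m) :
    (X - C (quadRootAdd γ τ m)) * (X - C (quadRootSub γ τ m)) =
      X * (X + C (γ / τ)) - C (m / τ) := by
  have hsum : quadRootAdd γ τ m + quadRootSub γ τ m = -(γ / τ) := by
    unfold quadRootAdd quadRootSub; field_simp; ring
  have hprod : quadRootAdd γ τ m * quadRootSub γ τ m = -(m / τ) := by
    unfold quadRootAdd quadRootSub
    field_simp
    nlinarith [Real.sq_sqrt hd]
  calc (X - C (quadRootAdd γ τ m)) * (X - C (quadRootSub γ τ m))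
      = X * (X - C (quadRootAdd γ τ m + quadRootSub γ τ m)) +
          C (quadRootAdd γ τ m * quadRootSub γ τ m) := by simp only [map_add, map_mul]; ring
    _ = X * (X + C (γ / τ)) - C (m / τ) := by rw [hsum, hprod]; simp [sub_eq_add_neg]

end QuadRoots

theorem charpoly_dampedLinearization_eq_prod {n : Type*} [Fintype n] [DecidableEq n]
    {B : Matrix n n ℝ} (hB : B.IsHermitian) {γ τ : ℝ} (hτ : 0 < τ)
    (hnonpos : ∀ i, hB.eigenvalues i ≤ 0) :
    (fromBlocks 0 1 (-(1 / τ) • B) (-(γ / τ) • (1 : Matrix n n ℝ))).charpoly =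
      ∏ i, (X - C (quadRootAdd γ τ (-hB.eigenvalues i))) *
        (X - C (quadRootSub γ τ (-hB.eigenvalues i))) := by
  rw [charpoly_fromBlocks_zero_one_smul_one, hB.charpoly_smul, prod_comp]
  refine Finset.prod_congr rfl fun i _ => ?_
  rw [X_sub_C_quadRootAdd_mul hτ.ne' (by nlinarith [hnonpos i, sq_nonneg γ])]
  simp [div_eq_inv_mul]

theorem exists_neg_eigenvalue_iff_exists_sq {n : Type*} [Fintype n] [DecidableEq n]
    {B : Matrix n n ℝ} (hB : B.IsHermitian) (hneg : ∀ i, hB.eigenvalues i < 0)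
    (P : ℝ → Prop) :
    (∃ i, P (-hB.eigenvalues i)) ↔
      ∃ μ : ℝ, 0 < μ ∧ Module.End.HasEigenvalue B.toLin' (-(μ ^ 2)) ∧ P (μ ^ 2) := by
  simp only [hB.hasEigenvalue_toLin'_iff]
  constructor
  · rintro ⟨i, hi⟩
    have hsq : Real.sqrt (-hB.eigenvalues i) ^ 2 = -hB.eigenvalues i :=
      Real.sq_sqrt (by linarith [hneg i])
    exact ⟨_, Real.sqrt_pos.2 (by linarith [hneg i]), ⟨i, by linarith⟩, hsq ▸ hi⟩
  · rintro ⟨μ, -, ⟨i, hi⟩, hμ⟩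
    exact ⟨i, by rwa [hi, neg_neg]⟩

theorem hyperbolicity_reduced_layer_dynamics_general
    (N : ℕ) (B : Matrix (Fin N) (Fin N) ℝ) (γ τ : ℝ)
    (hτ : 0 < τ)
    (hsymm : B.IsSymm)
    (hneg : ∀ y : Fin N → ℝ, y ≠ 0 → y ⬝ᵥ B.mulVec y < 0) :
    (∀ z : ℂ,
      ((Matrix.fromBlocks (0 : Matrix (Fin N) (Fin N) ℝ)
          (1 : Matrix (Fin N) (Fin N) ℝ)
          (-(1 / τ) • B)
          (-(γ / τ) • (1 : Matrix (Fin N) (Fin N) ℝ))).charpoly.map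
        (algebraMap ℝ ℂ)).IsRoot z → z.im = 0 ∧ z ≠ 0) ∧
    (∀ lam : ℝ,
      Module.End.HasEigenvalue
        (Matrix.toLin' (Matrix.fromBlocks (0 : Matrix (Fin N) (Fin N) ℝ)
          (1 : Matrix (Fin N) (Fin N) ℝ)
          (-(1 / τ) • B)
          (-(γ / τ) • (1 : Matrix (Fin N) (Fin N) ℝ)))) lam ↔
      ∃ μ : ℝ, 0 < μ ∧
        Module.End.HasEigenvalue (Matrix.toLin' B) (-(μ ^ 2)) ∧
        (lam = (-γ + Real.sqrt (γ ^ 2 + 4 * τ * μ ^ 2)) / (2 * τ) ∨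
         lam = (-γ - Real.sqrt (γ ^ 2 + 4 * τ * μ ^ 2)) / (2 * τ))) ∧
    (∀ μ : ℝ, 0 < μ →
      0 < (-γ + Real.sqrt (γ ^ 2 + 4 * τ * μ ^ 2)) / (2 * τ) ∧
      (-γ - Real.sqrt (γ ^ 2 + 4 * τ * μ ^ 2)) / (2 * τ) < 0) ∧
    (((Matrix.fromBlocks (0 : Matrix (Fin N) (Fin N) ℝ)
        (1 : Matrix (Fin N) (Fin N) ℝ)
        (-(1 / τ) • B)
        (-(γ / τ) • (1 : Matrix (Fin N) (Fin N) ℝ))).charpoly.roots.filter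
          (fun x => 0 < x)).card = N ∧
     ((Matrix.fromBlocks (0 : Matrix (Fin N) (Fin N) ℝ)
        (1 : Matrix (Fin N) (Fin N) ℝ)
        (-(1 / τ) • B)
        (-(γ / τ) • (1 : Matrix (Fin N) (Fin N) ℝ))).charpoly.roots.filter
          (fun x => x < 0)).card = N) := by
  have hB : B.IsHermitian := isHermitian_iff_isSymm.2 hsymm
  have heig : ∀ i, hB.eigenvalues i < 0 := hB.eigenvalues_neg hneg
  have hcp := charpoly_dampedLinearization_eq_prod (γ := γ) hB hτ fun i => (heig i).le
  have hadd : ∀ i, 0 < quadRootAdd γ τ (-hB.eigenvalues i) := fun i =>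
    quadRootAdd_pos hτ (neg_pos.2 (heig i))
  have hsub : ∀ i, quadRootSub γ τ (-hB.eigenvalues i) < 0 := fun i =>
    quadRootSub_neg hτ (neg_pos.2 (heig i))
  refine ⟨fun z hz => ?_, fun lam => ?_, fun μ hμ => ⟨quadRootAdd_pos hτ (by positivity),
    quadRootSub_neg hτ (by positivity)⟩, ?_, ?_⟩
  · simp only [hcp, Polynomial.map_prod, Polynomial.map_mul, Polynomial.map_sub, map_X, map_C,
      isRoot_prod_mul_X_sub_C_iff] at hz
    obtain ⟨i, rfl | rfl⟩ := hz
    · exact ⟨Complex.ofReal_im _, Complex.ofReal_ne_zero.2 (hadd i).ne'⟩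
    · exact ⟨Complex.ofReal_im _, Complex.ofReal_ne_zero.2 (hsub i).ne⟩
  · rw [Module.End.hasEigenvalue_iff_isRoot_charpoly, charpoly_toLin', hcp,
      isRoot_prod_mul_X_sub_C_iff]
    exact exists_neg_eigenvalue_iff_exists_sq hB heig
      (fun m => lam = quadRootAdd γ τ m ∨ lam = quadRootSub γ τ m)
  · rw [hcp, card_filter_roots_prod_mul_X_sub_C _ _ (0 < ·) hadd fun i => not_lt.2 (hsub i).le,
      Fintype.card_fin]
  · simp only [hcp, mul_comm (X - C (quadRootAdd _ _ _))]
    rw [card_filter_roots_prod_mul_X_sub_C _ _ (· < 0) hsub fun i => not_lt.2 (hadd i).le,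
      Fintype.card_fin]

/-- Hyperbolicity of the equilibrium of the reduced layer dynamics: let `B` be
symmetric negative definite and `γ, τ > 0`, and let
`J = [[0, I], [−(1/τ)B, −(γ/τ)I]]`.  Then every complex eigenvalue of `J`
(i.e. every complex root of its characteristic polynomial) is real and
nonzero; the real eigenvalues of `J` are exactly the numbers
`(−γ ± √(γ² + 4τμ²))/(2τ)` where `−μ²` (with `μ > 0`) ranges over the
eigenvalues of `B`, the `+` root being positive and the `−` root negative;
and, counted with multiplicity, the characteristic polynomial of `J` has
exactly `N` positive real roots and `N` negative real roots. -/
theorem hyperbolicity_reduced_layer_dynamics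
    (N : ℕ) (B : Matrix (Fin N) (Fin N) ℝ) (γ τ : ℝ)
    (hγ : 0 < γ) (hτ : 0 < τ)
    (hsymm : B.IsSymm)
    (hneg : ∀ y : Fin N → ℝ, y ≠ 0 → y ⬝ᵥ B.mulVec y < 0) :
    (∀ z : ℂ,
      ((Matrix.fromBlocks (0 : Matrix (Fin N) (Fin N) ℝ)
          (1 : Matrix (Fin N) (Fin N) ℝ)
          (-(1 / τ) • B)
          (-(γ / τ) • (1 : Matrix (Fin N) (Fin N) ℝ))).charpoly.map
        (algebraMap ℝ ℂ)).IsRoot z → z.im = 0 ∧ z ≠ 0) ∧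
    (∀ lam : ℝ,
      Module.End.HasEigenvalue
        (Matrix.toLin' (Matrix.fromBlocks (0 : Matrix (Fin N) (Fin N) ℝ)
          (1 : Matrix (Fin N) (Fin N) ℝ)
          (-(1 / τ) • B)
          (-(γ / τ) • (1 : Matrix (Fin N) (Fin N) ℝ)))) lam ↔
      ∃ μ : ℝ, 0 < μ ∧
        Module.End.HasEigenvalue (Matrix.toLin' B) (-(μ ^ 2)) ∧
        (lam = (-γ + Real.sqrt (γ ^ 2 + 4 * τ * μ ^ 2)) / (2 * τ) ∨
         lam = (-γ - Real.sqrt (γ ^ 2 + 4 * τ * μ ^ 2)) / (2 * τ))) ∧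
    (∀ μ : ℝ, 0 < μ →
      0 < (-γ + Real.sqrt (γ ^ 2 + 4 * τ * μ ^ 2)) / (2 * τ) ∧
      (-γ - Real.sqrt (γ ^ 2 + 4 * τ * μ ^ 2)) / (2 * τ) < 0) ∧
    (((Matrix.fromBlocks (0 : Matrix (Fin N) (Fin N) ℝ)
        (1 : Matrix (Fin N) (Fin N) ℝ)
        (-(1 / τ) • B)
        (-(γ / τ) • (1 : Matrix (Fin N) (Fin N) ℝ))).charpoly.roots.filter
          (fun x => 0 < x)).card = N ∧
     ((Matrix.fromBlocks (0 : Matrix (Fin N) (Fin N) ℝ)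
        (1 : Matrix (Fin N) (Fin N) ℝ)
        (-(1 / τ) • B)
        (-(γ / τ) • (1 : Matrix (Fin N) (Fin N) ℝ))).charpoly.roots.filter
          (fun x => x < 0)).card = N) :=
  hyperbolicity_reduced_layer_dynamics_general N B γ τ hτ hsymm hneg
end

section
/- The friction coefficient of the Allen–Cahn equation with relaxation is smaller than one: the improper integrals ∫_{−1}^1 √(2F(s)) F''(s) ds and ∫_{−1}^1 F'(s)²/√(2F(s)) ds both converge, and ∫_{−1}^1 √(2F(s)) F''(s) ds = −∫_{−1}^1 F'(s)²/√(2F(s)) ds < 0. Consequently, setting D_∞ := ∫_{−1}^1 √(2F(s)) ds, for every τ > 0 the constant γ_τ := 1 + (√2 τ / D_∞) ∫_{−1}^1 √(F(s)) F''(s) ds satisfies γ_τ = 1 − (τ/D_∞) ∫_{−1}^1 F'(s)²/√(2F(s)) ds < 1. -/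
/-!
On `(-1, 1)`, where `F > 0`, the product rule gives
`(√(2F) F')' = √(2F) F'' + F'² / √(2F)`, and `√(2F) F'` vanishes at `±1` because `F'` does.
The second summand is nonnegative and is the derivative of `√(2F) F'` minus a primitive of the
continuous first summand, so it is integrable, and the fundamental theorem of calculus yields
`∫ √(2F) F'' = -∫ F'² / √(2F)`. The right-hand side is strictly negative because `F'` cannot
vanish on all of `(0, 1)` when `F 0 > 0 = F 1`; the formula for `γ_τ` is then algebra, using
`√(2F) = √2 √F`.
-/

open MeasureTheory Set

theorem setIntegral_pos_of_continuousOn_of_nonneg_of_ne_zero {X : Type*} [TopologicalSpace X]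
    [MeasurableSpace X] [OpensMeasurableSpace X] {μ : Measure X} [μ.IsOpenPosMeasure]
    {f : X → ℝ} {U : Set X} {x : X} (hU : IsOpen U) (hf : ContinuousOn f U)
    (hfi : IntegrableOn f U μ) (hnonneg : ∀ y ∈ U, 0 ≤ f y) (hx : x ∈ U) (hfx : f x ≠ 0) :
    0 < ∫ y in U, f y ∂μ := by
  rw [setIntegral_pos_iff_support_of_nonneg_ae
    ((ae_restrict_iff' hU.measurableSet).2 (Filter.Eventually.of_forall hnonneg)) hfi,
    Function.support_eq_preimage, inter_comm]
  exact (hf.isOpen_inter_preimage hU isOpen_compl_singleton).measure_pos μ ⟨x, hx, hfx⟩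

/-- Subtracting a primitive of `f` from `G` leaves a function with nonnegative derivative `g`. -/
theorem integrableOn_Ioo_of_hasDerivAt_add_of_nonneg {f g G : ℝ → ℝ} {a b : ℝ}
    (hf : Continuous f) (hG : ContinuousOn G (Icc a b))
    (hderiv : ∀ x ∈ Ioo a b, HasDerivAt G (f x + g x) x) (hg : ∀ x ∈ Ioo a b, 0 ≤ g x) :
    IntegrableOn g (Ioo a b) := by
  have hprim : Continuous fun x => ∫ t in a..x, f t :=
    intervalIntegral.continuous_primitive (fun _ _ => hf.intervalIntegrable _ _) a
  refine (intervalIntegral.integrableOn_deriv_of_nonneg (g := fun x => G x - ∫ t in a..x, f t)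
    (hG.sub hprim.continuousOn) (fun x hx => ?_) hg).mono_set Ioo_subset_Ioc_self
  exact ((hderiv x hx).sub (hf.integral_hasStrictDerivAt a x).hasDerivAt).congr_deriv
    (add_sub_cancel_left _ _)

theorem integral_Ioo_eq_sub_of_hasDerivAt {f' G : ℝ → ℝ} {a b : ℝ} (hab : a ≤ b)
    (hG : ContinuousOn G (Icc a b)) (hderiv : ∀ x ∈ Ioo a b, HasDerivAt G (f' x) x)
    (hint : IntegrableOn f' (Ioo a b)) :
    ∫ x in Ioo a b, f' x = G b - G a := by
  rw [← integral_Ioc_eq_integral_Ioo, ← intervalIntegral.integral_of_le hab]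
  exact intervalIntegral.integral_eq_sub_of_hasDerivAt_of_le hab hG hderiv
    ((intervalIntegrable_iff_integrableOn_Ioo_of_le hab).2 hint)

theorem hasDerivAt_sqrt_two_mul_mul_deriv {F : ℝ → ℝ} {x : ℝ} (hFx : 0 < F x)
    (hF : DifferentiableAt ℝ F x) (hF' : DifferentiableAt ℝ (deriv F) x) :
    HasDerivAt (fun s => Real.sqrt (2 * F s) * deriv F s)
      (Real.sqrt (2 * F x) * deriv (deriv F) x + deriv F x ^ 2 / Real.sqrt (2 * F x)) x := by
  refine (((hF.hasDerivAt.const_mul 2).sqrt (by positivity)).mul hF'.hasDerivAt).congr_deriv ?_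
  field_simp
  ring

theorem integrableOn_and_integral_sqrt_two_mul_mul_deriv_deriv_eq_neg {F : ℝ → ℝ} {a b : ℝ}
    (hab : a ≤ b) (hF : Differentiable ℝ F) (hF' : Differentiable ℝ (deriv F))
    (hF'' : Continuous (deriv (deriv F))) (hpos : ∀ x ∈ Ioo a b, 0 < F x)
    (ha : deriv F a = 0) (hb : deriv F b = 0) :
    IntegrableOn (fun s => Real.sqrt (2 * F s) * deriv (deriv F) s) (Ioo a b) ∧
    IntegrableOn (fun s => deriv F s ^ 2 / Real.sqrt (2 * F s)) (Ioo a b) ∧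
    ∫ s in Ioo a b, Real.sqrt (2 * F s) * deriv (deriv F) s =
      -∫ s in Ioo a b, deriv F s ^ 2 / Real.sqrt (2 * F s) := by
  have hcont : Continuous fun s => Real.sqrt (2 * F s) * deriv (deriv F) s := by
    have := hF.continuous; fun_prop
  have hG : ContinuousOn (fun s => Real.sqrt (2 * F s) * deriv F s) (Icc a b) := by
    have := hF.continuous; have := hF'.continuous; fun_prop
  have hderiv : ∀ x ∈ Ioo a b, HasDerivAt (fun s => Real.sqrt (2 * F s) * deriv F s)
      (Real.sqrt (2 * F x) * deriv (deriv F) x + deriv F x ^ 2 / Real.sqrt (2 * F x)) x :=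
    fun x hx => hasDerivAt_sqrt_two_mul_mul_deriv (hpos x hx) (hF x) (hF' x)
  have hint₁ : IntegrableOn (fun s => Real.sqrt (2 * F s) * deriv (deriv F) s) (Ioo a b) :=
    hcont.integrableOn_Icc.mono_set Ioo_subset_Icc_self
  have hint₂ := integrableOn_Ioo_of_hasDerivAt_add_of_nonneg hcont hG hderiv
    fun x _ => by positivity
  refine ⟨hint₁, hint₂, ?_⟩
  have hftc := integral_Ioo_eq_sub_of_hasDerivAt hab hG hderiv (hint₁.add hint₂)
  rw [integral_add hint₁ hint₂, ha, hb, mul_zero, mul_zero, sub_zero] at hftc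
  linarith

theorem integral_sqrt_two_mul_mul {X : Type*} [MeasurableSpace X] (μ : Measure X)
    (F g : X → ℝ) :
    ∫ x, Real.sqrt (2 * F x) * g x ∂μ = Real.sqrt 2 * ∫ x, Real.sqrt (F x) * g x ∂μ := by
  rw [← integral_const_mul]
  simp_rw [Real.sqrt_mul zero_le_two, mul_assoc]

theorem integral_sq_deriv_div_sqrt_two_mul_pos {F : ℝ → ℝ} {U : Set ℝ} {c : ℝ} (hU : IsOpen U)
    (hF : Continuous F) (hF' : Continuous (deriv F)) (hpos : ∀ x ∈ U, 0 < F x)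
    (hint : IntegrableOn (fun s => deriv F s ^ 2 / Real.sqrt (2 * F s)) U) (hc : c ∈ U)
    (hF'c : deriv F c ≠ 0) :
    0 < ∫ s in U, deriv F s ^ 2 / Real.sqrt (2 * F s) := by
  have hsqrt_ne : ∀ x ∈ U, Real.sqrt (2 * F x) ≠ 0 := fun x hx =>
    (Real.sqrt_pos.2 (by linarith [hpos x hx])).ne'
  exact setIntegral_pos_of_continuousOn_of_nonneg_of_ne_zero hU
    (ContinuousOn.div (by fun_prop) (by fun_prop) hsqrt_ne) hint (fun s _ => by positivity) hc
    (div_ne_zero (pow_ne_zero 2 hF'c) (hsqrt_ne c hc))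

theorem relaxation_friction_coefficient_lt_one_general
    (F : ℝ → ℝ) (hF : ContDiff ℝ 2 F)
    (h1 : F 1 = 0)
    (h2 : deriv F 1 = 0) (h2' : deriv F (-1) = 0)
    (h4 : ∀ s : ℝ, s ≠ 1 → s ≠ -1 → 0 < F s)
    (τ : ℝ) (hτ : 0 < τ) :
    IntegrableOn (fun s => Real.sqrt (2 * F s) * deriv (deriv F) s)
      (Set.Ioo (-1 : ℝ) 1) ∧
    IntegrableOn (fun s => (deriv F s) ^ 2 / Real.sqrt (2 * F s))
      (Set.Ioo (-1 : ℝ) 1) ∧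
    (∫ s in Set.Ioo (-1 : ℝ) 1, Real.sqrt (2 * F s) * deriv (deriv F) s) =
      -∫ s in Set.Ioo (-1 : ℝ) 1, (deriv F s) ^ 2 / Real.sqrt (2 * F s) ∧
    (∫ s in Set.Ioo (-1 : ℝ) 1, Real.sqrt (2 * F s) * deriv (deriv F) s) < 0 ∧
    (1 + (Real.sqrt 2 * τ / ∫ s in Set.Ioo (-1 : ℝ) 1, Real.sqrt (2 * F s)) *
        ∫ s in Set.Ioo (-1 : ℝ) 1, Real.sqrt (F s) * deriv (deriv F) s) =
      1 - (τ / ∫ s in Set.Ioo (-1 : ℝ) 1, Real.sqrt (2 * F s)) *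
        ∫ s in Set.Ioo (-1 : ℝ) 1, (deriv F s) ^ 2 / Real.sqrt (2 * F s) ∧
    (1 + (Real.sqrt 2 * τ / ∫ s in Set.Ioo (-1 : ℝ) 1, Real.sqrt (2 * F s)) *
        ∫ s in Set.Ioo (-1 : ℝ) 1, Real.sqrt (F s) * deriv (deriv F) s) < 1 := by
  have hdF : Differentiable ℝ F := hF.differentiable (by norm_num)
  have hF' : ContDiff ℝ 1 (deriv F) := hF.iterate_deriv' 1 1
  have hFcont : Continuous F := hdF.continuous
  have hpos : ∀ s ∈ Ioo (-1 : ℝ) 1, 0 < F s := fun s hs => h4 s hs.2.ne hs.1.ne'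
  obtain ⟨hint₁, hint₂, hibp⟩ :=
    integrableOn_and_integral_sqrt_two_mul_mul_deriv_deriv_eq_neg (by norm_num) hdF
      (hF'.differentiable one_ne_zero) (hF'.continuous_deriv le_rfl) hpos h2' h2
  obtain ⟨c, hc, hFc⟩ := exists_deriv_eq_slope F zero_lt_one hFcont.continuousOn
    hdF.differentiableOn
  have hF0 : 0 < F 0 := h4 0 (by norm_num) (by norm_num)
  have hF'c : deriv F c ≠ 0 := by
    rw [hFc, h1, zero_sub, sub_zero, div_one, neg_ne_zero]
    exact hF0.ne'
  have hI₂ := integral_sq_deriv_div_sqrt_two_mul_pos isOpen_Ioo hFcont hF'.continuous hpos hint₂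
    ⟨by linarith [hc.1], hc.2⟩ hF'c
  have hD : 0 < ∫ s in Ioo (-1 : ℝ) 1, Real.sqrt (2 * F s) := by
    have hcont : Continuous fun s => Real.sqrt (2 * F s) := by fun_prop
    exact setIntegral_pos_of_continuousOn_of_nonneg_of_ne_zero isOpen_Ioo hcont.continuousOn
      (hcont.integrableOn_Icc.mono_set Ioo_subset_Icc_self) (fun s _ => by positivity) (x := 0)
      (by norm_num) (by positivity)
  set D := ∫ s in Ioo (-1 : ℝ) 1, Real.sqrt (2 * F s)
  set I := ∫ s in Ioo (-1 : ℝ) 1, deriv F s ^ 2 / Real.sqrt (2 * F s)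
  have hγ : 1 + (Real.sqrt 2 * τ / D) * ∫ s in Ioo (-1 : ℝ) 1, Real.sqrt (F s) * deriv (deriv F) s =
      1 - (τ / D) * I := by
    rw [← neg_eq_iff_eq_neg.2 ((integral_sqrt_two_mul_mul _ _ _).symm.trans hibp)]
    ring
  refine ⟨hint₁, hint₂, hibp, by linarith, hγ, ?_⟩
  rw [hγ]
  linarith [mul_pos (div_pos hτ hD) hI₂]

/-- The friction coefficient of the Allen–Cahn equation with relaxation is
smaller than one: the improper integrals `∫_{−1}^1 √(2F) F''` and
`∫_{−1}^1 F'²/√(2F)` converge, they satisfy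
`∫ √(2F) F'' = −∫ F'²/√(2F) < 0`, and for every `τ > 0` the constant
`γ_τ := 1 + (√2 τ / D_∞) ∫ √F F''` (with `D_∞ := ∫ √(2F)`) equals
`1 − (τ/D_∞) ∫ F'²/√(2F)` and is `< 1`. -/
theorem relaxation_friction_coefficient_lt_one
    (F : ℝ → ℝ) (hF : ContDiff ℝ 2 F)
    (h1 : F 1 = 0) (h1' : F (-1) = 0)
    (h2 : deriv F 1 = 0) (h2' : deriv F (-1) = 0)
    (h3 : 0 < deriv (deriv F) 1) (h3' : 0 < deriv (deriv F) (-1))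
    (h4 : ∀ s : ℝ, s ≠ 1 → s ≠ -1 → 0 < F s)
    (τ : ℝ) (hτ : 0 < τ) :
    IntegrableOn (fun s => Real.sqrt (2 * F s) * deriv (deriv F) s)
      (Set.Ioo (-1 : ℝ) 1) ∧
    IntegrableOn (fun s => (deriv F s) ^ 2 / Real.sqrt (2 * F s))
      (Set.Ioo (-1 : ℝ) 1) ∧
    (∫ s in Set.Ioo (-1 : ℝ) 1, Real.sqrt (2 * F s) * deriv (deriv F) s) =
      -∫ s in Set.Ioo (-1 : ℝ) 1, (deriv F s) ^ 2 / Real.sqrt (2 * F s) ∧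
    (∫ s in Set.Ioo (-1 : ℝ) 1, Real.sqrt (2 * F s) * deriv (deriv F) s) < 0 ∧
    (1 + (Real.sqrt 2 * τ / ∫ s in Set.Ioo (-1 : ℝ) 1, Real.sqrt (2 * F s)) *
        ∫ s in Set.Ioo (-1 : ℝ) 1, Real.sqrt (F s) * deriv (deriv F) s) =
      1 - (τ / ∫ s in Set.Ioo (-1 : ℝ) 1, Real.sqrt (2 * F s)) *
        ∫ s in Set.Ioo (-1 : ℝ) 1, (deriv F s) ^ 2 / Real.sqrt (2 * F s) ∧
    (1 + (Real.sqrt 2 * τ / ∫ s in Set.Ioo (-1 : ℝ) 1, Real.sqrt (2 * F s)) *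
        ∫ s in Set.Ioo (-1 : ℝ) 1, Real.sqrt (F s) * deriv (deriv F) s) < 1 :=
  relaxation_friction_coefficient_lt_one_general F hF h1 h2 h2' h4 τ hτ
end

section
/- Singular perturbation estimate (Theorem on the relaxation limit of the layer dynamics, velocity bounds): under the stated hypotheses there exists a constant C > 0, depending only on N, C₀, T and c₀, such that ∫₀^T |η(t) − η_p(t)| dt ≤ (C/γ)(E_τ(0) + 1 − γ + τ); moreover, for every t₁ ∈ (0, T) there exists a constant C' > 0, depending only on N, C₀, T, c₀ and t₁, such that |η(t) − η_p(t)| ≤ (C'/γ)(E_τ(0) + 1 − γ + τ) for every t ∈ [t₁, T]. -/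
/-!
Write `e = h - h_p` and `f = η - η_p`. Then `e' = f` and `f' = -(γ/τ) f + r` with
`τ |r| ≤ C₀ |e| + (1 - γ) C₀ + τ C₀²`. Along the energy `γ |e| + τ |f|` the term `γ |f|` produced
by `e' = f` is cancelled by the damping of `τ |f|`, leaving only `τ |r|`; Grönwall then bounds the
energy, hence `γ |e|`, by a multiple of `R = E_τ(0) + 1 - γ + τ`. Knowing `|e|`, the forcing is
bounded and the damped equation gives `|f t| ≤ exp (-γ t / τ) |f 0| + K R / γ`. The transient
has integral at most `τ |f 0| / γ ≤ R / γ`, and for `t ≥ t₁` it is at most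
`τ |f 0| / (γ t₁) ≤ R / (γ t₁)`.

The norms of the errors are only one-sidedly differentiable, so Grönwall is applied through
upper right Dini derivatives.
-/

open MeasureTheory Set Filter Topology Real

/-- `D⁺f(x) ≤ m`, for the upper right Dini derivative `D⁺`. -/
def UpperRightDiniLE (f : ℝ → ℝ) (x m : ℝ) : Prop :=
  ∀ r, m < r → ∀ᶠ z in 𝓝[>] x, (z - x)⁻¹ * (f z - f x) < r

namespace UpperRightDiniLE

variable {f g : ℝ → ℝ} {x m n : ℝ}

theorem mono (hf : UpperRightDiniLE f x m) (hmn : m ≤ n) : UpperRightDiniLE f x n :=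
  fun r hr ↦ hf r (hmn.trans_lt hr)

theorem add (hf : UpperRightDiniLE f x m) (hg : UpperRightDiniLE g x n) :
    UpperRightDiniLE (fun z ↦ f z + g z) x (m + n) := by
  intro r hr
  filter_upwards [hf (m + (r - m - n) / 2) (by linarith),
    hg (n + (r - m - n) / 2) (by linarith)] with z hfz hgz
  linear_combination hfz + hgz

theorem const_mul (hf : UpperRightDiniLE f x m) {a : ℝ} (ha : 0 < a) :
    UpperRightDiniLE (fun z ↦ a * f z) x (a * m) := by
  intro r hr
  filter_upwards [hf (r / a) (by rwa [lt_div_iff₀' ha])] with z hz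
  have hlt := mul_lt_mul_of_pos_left hz ha
  rw [mul_div_cancel₀ _ ha.ne'] at hlt
  linear_combination hlt

end UpperRightDiniLE

theorem gronwallBound_le_mul_exp {δ K ε : ℝ} (hK : 0 < K) (hε : 0 ≤ ε) (x : ℝ) :
    gronwallBound δ K ε x ≤ (δ + ε / K) * exp (K * x) := by
  rw [gronwallBound_of_K_ne_0 hK.ne']
  nlinarith [div_nonneg hε hK.le]

theorem one_sub_mul_add_mul_sq_le {C₀ τ γ A : ℝ} (hC₀ : 0 ≤ C₀) (hτ : 0 ≤ τ) (hγ1 : γ ≤ 1)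
    (hA : 0 ≤ A) : (1 - γ) * C₀ + τ * C₀ ^ 2 ≤ (C₀ + C₀ ^ 2) * (A + 1 - γ + τ) := by
  nlinarith [mul_nonneg hC₀ hA, mul_nonneg (sq_nonneg C₀) hA,
    mul_nonneg (sq_nonneg C₀) (sub_nonneg.mpr hγ1), mul_nonneg hC₀ hτ]

theorem exp_neg_le_inv {x : ℝ} (hx : 0 < x) : exp (-x) ≤ x⁻¹ := by
  rw [← mul_one x⁻¹, le_inv_mul_iff₀ hx]
  exact (mul_exp_neg_le_exp_neg_one x).trans (exp_le_one_iff.mpr (by norm_num))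

section NormedSpace

variable {E : Type*} [NormedAddCommGroup E] [NormedSpace ℝ E]

theorem HasDerivWithinAt.upperRightDiniLE_norm {f : ℝ → E} {c x : ℝ} {r : E}
    (hf : HasDerivWithinAt f (-c • f x + r) (Ioi x) x) :
    UpperRightDiniLE (fun z ↦ ‖f z‖) x (-c * ‖f x‖ + ‖r‖) := by
  intro m hm
  -- `φ z - φ x = f z - (1 - c (z - x)) • f x`, and `φ` has right derivative `r` at `x`.
  set φ : ℝ → E := fun z ↦ f z + (c * (z - x)) • f x
  have hφ : HasDerivWithinAt φ r (Ioi x) x := by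
    refine (hf.add ((((hasDerivWithinAt_id x _).sub_const x).const_mul c).smul_const
      (f x))).congr_deriv ?_
    module
  have hφx : φ x = f x := by simp [φ]
  have hpos : ∀ᶠ z in 𝓝[>] x, 0 ≤ 1 - c * (z - x) := by
    have hcont : ContinuousAt (fun z ↦ 1 - c * (z - x)) x := by fun_prop
    exact nhdsWithin_le_nhds (hcont.eventually (eventually_ge_nhds (by simp)))
  filter_upwards [hφ.limsup_norm_slope_le (r := m + c * ‖f x‖) (by linarith), hpos,
    self_mem_nhdsWithin] with z hz hz1 (hxz : x < z)
  have hzx : 0 < z - x := sub_pos.mpr hxz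
  rw [Real.norm_eq_abs, abs_of_pos hzx, hφx, inv_mul_lt_iff₀ hzx] at hz
  have hfz : f z = (1 - c * (z - x)) • f x + (φ z - f x) := by simp only [φ]; module
  have hnorm : ‖f z‖ ≤ (1 - c * (z - x)) * ‖f x‖ + ‖φ z - f x‖ := by
    rw [hfz]
    refine (norm_add_le _ _).trans ?_
    rw [norm_smul, Real.norm_of_nonneg hz1]
  rw [inv_mul_lt_iff₀ hzx]
  nlinarith

theorem HasDerivWithinAt.upperRightDiniLE_norm_of_mem_Ico {f : ℝ → E} {a b c x : ℝ} {r : E}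
    (hx : x ∈ Ico a b) (hf : HasDerivWithinAt f (-c • f x + r) (Icc a b) x) :
    UpperRightDiniLE (fun z ↦ ‖f z‖) x (-c * ‖f x‖ + ‖r‖) :=
  (hf.mono_of_mem_nhdsWithin (Icc_mem_nhdsGT_of_mem hx)).upperRightDiniLE_norm

theorem weighted_energy_le_gronwallBound {e f r : ℝ → E} {a b α β k ε : ℝ}
    (hα : 0 < α) (hβ : 0 < β) (hk : 0 ≤ k)
    (he : ∀ t ∈ Icc a b, HasDerivWithinAt e (f t) (Icc a b) t)
    (hf : ∀ t ∈ Icc a b, HasDerivWithinAt f (-(α / β) • f t + r t) (Icc a b) t)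
    (hr : ∀ t ∈ Icc a b, β * ‖r t‖ ≤ k * ‖e t‖ + ε) :
    ∀ t ∈ Icc a b, α * ‖e t‖ + β * ‖f t‖ ≤
      gronwallBound (α * ‖e a‖ + β * ‖f a‖) (k / α) ε (t - a) := by
  refine le_gronwallBound_of_liminf_deriv_right_le (f' := fun t ↦ β * ‖r t‖) ?_ ?_ le_rfl ?_
  · exact ContinuousOn.add (continuousOn_const.mul (fun t ht ↦ (he t ht).continuousWithinAt.norm))
      (continuousOn_const.mul (fun t ht ↦ (hf t ht).continuousWithinAt.norm))
  · intro x hx m hm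
    have hx' := Ico_subset_Icc_self hx
    have hde : HasDerivWithinAt e (-(0 : ℝ) • e x + f x) (Icc a b) x := by simpa using he x hx'
    refine (((hde.upperRightDiniLE_norm_of_mem_Ico hx).const_mul hα).add
      (((hf x hx').upperRightDiniLE_norm_of_mem_Ico hx).const_mul hβ) |>.mono ?_ m hm).frequently
    field_simp
    linarith
  · intro x hx
    have hke : k * ‖e x‖ ≤ k / α * (α * ‖e x‖ + β * ‖f x‖) := by
      rw [div_mul_eq_mul_div, le_div_iff₀ hα]
      nlinarith [mul_nonneg (mul_nonneg hk hβ.le) (norm_nonneg (f x))]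
    linarith [hr x (Ico_subset_Icc_self hx)]

theorem norm_le_exp_mul_add_of_hasDerivWithinAt {f r : ℝ → E} {a b c q : ℝ}
    (hc : 0 < c) (hq : 0 ≤ q)
    (hf : ∀ t ∈ Icc a b, HasDerivWithinAt f (-c • f t + r t) (Icc a b) t)
    (hr : ∀ t ∈ Icc a b, ‖r t‖ ≤ q) :
    ∀ t ∈ Icc a b, ‖f t‖ ≤ exp (-c * (t - a)) * ‖f a‖ + q / c := by
  intro t ht
  have hgr := le_gronwallBound_of_liminf_deriv_right_le (f' := fun t ↦ -c * ‖f t‖ + ‖r t‖)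
    (K := -c) (ε := q)
    (fun t ht ↦ (hf t ht).continuousWithinAt.norm)
    (fun x hx m hm ↦ ((hf x (Ico_subset_Icc_self hx)).upperRightDiniLE_norm_of_mem_Ico hx m
      hm).frequently)
    le_rfl (fun x hx ↦ by linarith [hr x (Ico_subset_Icc_self hx)]) t ht
  rw [gronwallBound_of_K_ne_0 (neg_ne_zero.mpr hc.ne')] at hgr
  calc ‖f t‖ ≤ _ := hgr
    _ = exp (-c * (t - a)) * ‖f a‖ + q / c - q / c * exp (-c * (t - a)) := by
      field_simp
      ring
    _ ≤ exp (-c * (t - a)) * ‖f a‖ + q / c := by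
      linarith [mul_nonneg (div_nonneg hq hc.le) (exp_pos (-c * (t - a))).le]

section Relaxation

variable {e f r : ℝ → E} {T τ γ c₀ C₀ : ℝ}

theorem norm_position_error_le (hc₀ : 0 < c₀) (hγc : c₀ ≤ γ) (hγ1 : γ ≤ 1) (hτ : 0 < τ)
    (hC₀ : 0 < C₀)
    (he : ∀ t ∈ Icc 0 T, HasDerivWithinAt e (f t) (Icc 0 T) t)
    (hf : ∀ t ∈ Icc 0 T, HasDerivWithinAt f (-(γ / τ) • f t + r t) (Icc 0 T) t)
    (hr : ∀ t ∈ Icc 0 T, τ * ‖r t‖ ≤ C₀ * ‖e t‖ + ((1 - γ) * C₀ + τ * C₀ ^ 2)) :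
    ∀ t ∈ Icc 0 T, ‖e t‖ ≤
      (2 + C₀) * exp (C₀ * T / c₀) * ((γ * ‖e 0‖ + τ * ‖f 0‖) + 1 - γ + τ) / γ := by
  intro t ht
  have hγ : 0 < γ := hc₀.trans_le hγc
  set R := (γ * ‖e 0‖ + τ * ‖f 0‖) + 1 - γ + τ
  have hE₀ : 0 ≤ γ * ‖e 0‖ + τ * ‖f 0‖ := by positivity
  have hR₀ : γ * ‖e 0‖ + τ * ‖f 0‖ ≤ R := by linarith
  have hB₀ : 0 ≤ (1 - γ) * C₀ + τ * C₀ ^ 2 := by nlinarith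
  have hB : ((1 - γ) * C₀ + τ * C₀ ^ 2) / (C₀ / γ) ≤ (1 + C₀) * R := by
    rw [div_div_eq_mul_div, div_le_iff₀ hC₀]
    nlinarith [mul_le_mul_of_nonneg_left hγ1 hB₀,
      one_sub_mul_add_mul_sq_le hC₀.le hτ.le hγ1 hE₀]
  have hexp : exp (C₀ / γ * (t - 0)) ≤ exp (C₀ * T / c₀) := by
    rw [exp_le_exp, sub_zero, mul_div_right_comm]
    exact mul_le_mul (div_le_div_of_nonneg_left hC₀.le hc₀ hγc) ht.2 ht.1 (by positivity)
  rw [le_div_iff₀ hγ]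
  calc ‖e t‖ * γ ≤ γ * ‖e t‖ + τ * ‖f t‖ := by nlinarith [norm_nonneg (f t)]
    _ ≤ gronwallBound (γ * ‖e 0‖ + τ * ‖f 0‖) (C₀ / γ) ((1 - γ) * C₀ + τ * C₀ ^ 2) (t - 0) :=
      weighted_energy_le_gronwallBound hγ hτ hC₀.le he hf hr t ht
    _ ≤ (R + (1 + C₀) * R) * exp (C₀ * T / c₀) :=
      (gronwallBound_le_mul_exp (by positivity) (by nlinarith) _).trans
        (mul_le_mul (add_le_add hR₀ hB) hexp (exp_pos _).le (by nlinarith))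
    _ = (2 + C₀) * exp (C₀ * T / c₀) * R := by ring

theorem norm_velocity_error_le (hc₀ : 0 < c₀) (hγc : c₀ ≤ γ) (hγ1 : γ ≤ 1) (hτ : 0 < τ)
    (hC₀ : 0 < C₀)
    (he : ∀ t ∈ Icc 0 T, HasDerivWithinAt e (f t) (Icc 0 T) t)
    (hf : ∀ t ∈ Icc 0 T, HasDerivWithinAt f (-(γ / τ) • f t + r t) (Icc 0 T) t)
    (hr : ∀ t ∈ Icc 0 T, τ * ‖r t‖ ≤ C₀ * ‖e t‖ + ((1 - γ) * C₀ + τ * C₀ ^ 2)) :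
    ∀ t ∈ Icc 0 T, ‖f t‖ ≤ exp (-(γ / τ) * t) * ‖f 0‖ +
      (C₀ * ((2 + C₀) * exp (C₀ * T / c₀)) / c₀ + C₀ + C₀ ^ 2) *
        ((γ * ‖e 0‖ + τ * ‖f 0‖) + 1 - γ + τ) / γ := by
  intro t ht
  have hγ : 0 < γ := hc₀.trans_le hγc
  have hpos := norm_position_error_le hc₀ hγc hγ1 hτ hC₀ he hf hr
  have hK : 0 ≤ (2 + C₀) * exp (C₀ * T / c₀) := by positivity
  set K := (2 + C₀) * exp (C₀ * T / c₀)
  set R := (γ * ‖e 0‖ + τ * ‖f 0‖) + 1 - γ + τ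
  have hE₀ : 0 ≤ γ * ‖e 0‖ + τ * ‖f 0‖ := by positivity
  have hR : 0 ≤ R := by linarith
  set Q := C₀ * (K * R / γ) + ((1 - γ) * C₀ + τ * C₀ ^ 2)
  have hQ : Q ≤ (C₀ * K / c₀ + C₀ + C₀ ^ 2) * R := by
    have hKR : C₀ * (K * R / γ) ≤ C₀ * K / c₀ * R := by
      rw [mul_div_assoc', ← mul_assoc, div_mul_eq_mul_div]
      gcongr
    linarith [one_sub_mul_add_mul_sq_le hC₀.le hτ.le hγ1 hE₀]
  have hforce : ∀ s ∈ Icc 0 T, ‖r s‖ ≤ Q / τ := fun s hs ↦ by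
    rw [le_div_iff₀' hτ]
    linarith [hr s hs, mul_le_mul_of_nonneg_left (hpos s hs) hC₀.le]
  have hvel := norm_le_exp_mul_add_of_hasDerivWithinAt (by positivity)
    ((norm_nonneg _).trans (hforce t ht)) hf hforce t ht
  rw [sub_zero, div_div_div_cancel_right₀ hτ.ne'] at hvel
  calc ‖f t‖ ≤ exp (-(γ / τ) * t) * ‖f 0‖ + Q / γ := hvel
    _ ≤ _ := by gcongr

end Relaxation

section LayerDynamics

variable {P : E → E} {hp h η : ℝ → E} {τ γ C₀ : ℝ}

theorem hasDerivWithinAt_velocity_error {s : Set ℝ} {t : ℝ}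
    (hP : DifferentiableAt ℝ P (hp t)) (hhp : HasDerivWithinAt hp (P (hp t)) s t)
    (hη : HasDerivWithinAt η (τ⁻¹ • (P (h t) - γ • η t)) s t) :
    HasDerivWithinAt (fun t ↦ η t - P (hp t))
      (-(γ / τ) • (η t - P (hp t)) +
        (τ⁻¹ • (P (h t) - γ • P (hp t)) - fderiv ℝ P (hp t) (P (hp t)))) s t := by
  refine (hη.sub (hP.hasFDerivAt.comp_hasDerivWithinAt t hhp)).congr_deriv ?_
  rw [div_eq_mul_inv]
  module

theorem norm_forcing_le {p q : E} (hτ : 0 < τ) (hγ1 : γ ≤ 1) (hPp : ‖P p‖ ≤ C₀)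
    (hDP : ‖fderiv ℝ P p‖ ≤ C₀) (hLip : ‖P q - P p‖ ≤ C₀ * ‖q - p‖) :
    τ * ‖τ⁻¹ • (P q - γ • P p) - fderiv ℝ P p (P p)‖ ≤
      C₀ * ‖q - p‖ + ((1 - γ) * C₀ + τ * C₀ ^ 2) := by
  have hC₀ : 0 ≤ C₀ := (norm_nonneg _).trans hPp
  have hfirst : ‖P q - γ • P p‖ ≤ C₀ * ‖q - p‖ + (1 - γ) * C₀ :=
    calc ‖P q - γ • P p‖ = ‖(P q - P p) + (1 - γ) • P p‖ := by congr 1; module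
      _ ≤ ‖P q - P p‖ + ‖(1 - γ) • P p‖ := norm_add_le _ _
      _ = ‖P q - P p‖ + (1 - γ) * ‖P p‖ := by
        rw [norm_smul, Real.norm_of_nonneg (sub_nonneg.mpr hγ1)]
      _ ≤ C₀ * ‖q - p‖ + (1 - γ) * C₀ := by gcongr
  have hsecond : ‖fderiv ℝ P p (P p)‖ ≤ C₀ * C₀ :=
    (ContinuousLinearMap.le_of_opNorm_le _ hDP _).trans (mul_le_mul_of_nonneg_left hPp hC₀)
  calc τ * ‖τ⁻¹ • (P q - γ • P p) - fderiv ℝ P p (P p)‖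
      ≤ τ * (‖τ⁻¹ • (P q - γ • P p)‖ + ‖fderiv ℝ P p (P p)‖) := by gcongr; exact norm_sub_le _ _
    _ = ‖P q - γ • P p‖ + τ * ‖fderiv ℝ P p (P p)‖ := by
      rw [norm_smul, norm_inv, Real.norm_of_nonneg hτ.le]
      field_simp
    _ ≤ _ := by nlinarith

theorem norm_velocity_error_le_of_layer_dynamics {T c₀ : ℝ} (hc₀ : 0 < c₀) (hγc : c₀ ≤ γ)
    (hγ1 : γ ≤ 1) (hτ : 0 < τ) (hC₀ : 0 < C₀) (hP : ContDiff ℝ 1 P)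
    (hhp : ∀ t ∈ Icc 0 T, HasDerivWithinAt hp (P (hp t)) (Icc 0 T) t)
    (hh : ∀ t ∈ Icc 0 T, HasDerivWithinAt h (η t) (Icc 0 T) t)
    (hη : ∀ t ∈ Icc 0 T, HasDerivWithinAt η (τ⁻¹ • (P (h t) - γ • η t)) (Icc 0 T) t)
    (hPb : ∀ t ∈ Icc 0 T, ‖P (hp t)‖ ≤ C₀)
    (hDb : ∀ t ∈ Icc 0 T, ‖fderiv ℝ P (hp t)‖ ≤ C₀)
    (hLip : ∀ t ∈ Icc 0 T, ∀ d : E, ‖P (hp t + d) - P (hp t)‖ ≤ C₀ * ‖d‖) :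
    ∀ t ∈ Icc 0 T, ‖η t - P (hp t)‖ ≤ exp (-(γ / τ) * t) * ‖η 0 - P (hp 0)‖ +
      (C₀ * ((2 + C₀) * exp (C₀ * T / c₀)) / c₀ + C₀ + C₀ ^ 2) *
        ((γ * ‖h 0 - hp 0‖ + τ * ‖η 0 - P (hp 0)‖) + 1 - γ + τ) / γ := by
  have hLip' : ∀ t ∈ Icc 0 T, ‖P (h t) - P (hp t)‖ ≤ C₀ * ‖h t - hp t‖ := fun t ht ↦ by
    simpa only [add_sub_cancel] using hLip t ht (h t - hp t)
  exact norm_velocity_error_le (e := fun t ↦ h t - hp t) hc₀ hγc hγ1 hτ hC₀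
    (fun t ht ↦ (hh t ht).sub (hhp t ht))
    (fun t ht ↦ hasDerivWithinAt_velocity_error (hP.differentiable one_ne_zero _) (hhp t ht)
      (hη t ht))
    (fun t ht ↦ norm_forcing_le hτ hγ1 (hPb t ht) (hDb t ht) (hLip' t ht))

end LayerDynamics

end NormedSpace

theorem setIntegral_Icc_le_of_le_exp_mul_add {u : ℝ → ℝ} {T c A D : ℝ} (hT : 0 ≤ T)
    (hc : 0 < c) (hA : 0 ≤ A) (hu₀ : ∀ t ∈ Icc 0 T, 0 ≤ u t)
    (hu : ∀ t ∈ Icc 0 T, u t ≤ exp (-c * t) * A + D) :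
    ∫ t in Icc 0 T, u t ≤ A / c + T * D := by
  have hexp : IntegrableOn (fun t ↦ exp (-c * t)) (Ioi 0) := exp_neg_integrableOn_Ioi 0 hc
  have hexpIcc : IntegrableOn (fun t ↦ exp (-c * t)) (Icc 0 T) :=
    (continuous_exp.comp (continuous_const.mul continuous_id)).integrableOn_Icc
  calc ∫ t in Icc 0 T, u t ≤ ∫ t in Icc 0 T, (exp (-c * t) * A + D) :=
        integral_mono_of_nonneg (ae_restrict_of_forall_mem measurableSet_Icc hu₀)
          ((hexpIcc.mul_const A).add (integrableOn_const (by simp)))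
          (ae_restrict_of_forall_mem measurableSet_Icc hu)
    _ = (∫ t in Icc 0 T, exp (-c * t)) * A + T * D := by
      rw [integral_add (hexpIcc.mul_const A) (integrableOn_const (by simp)), integral_mul_const,
        setIntegral_const, Real.volume_real_Icc_of_le hT, sub_zero, smul_eq_mul]
    _ ≤ (∫ t in Ioi 0, exp (-c * t)) * A + T * D := by
      gcongr ?_ * A + _
      exact setIntegral_mono_set hexp (ae_of_all _ fun t ↦ (exp_pos _).le)
        (Ioc_ae_eq_Icc.symm.le.trans Ioc_subset_Ioi_self.eventuallyLE)
    _ = A / c + T * D := by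
      rw [integral_exp_mul_Ioi (neg_lt_zero.mpr hc), mul_zero, exp_zero]
      field_simp

/-- Singular perturbation estimate (velocity bounds) for the relaxation limit
of the layer dynamics: there is `C > 0` depending only on `N`, `C₀`, `T`, `c₀`
with `∫₀^T |η − η_p| ≤ (C/γ)(E_τ(0) + 1 − γ + τ)`, and for every `t₁ ∈ (0,T)`
there is `C' > 0` depending only on `N`, `C₀`, `T`, `c₀`, `t₁` with
`|η(t) − η_p(t)| ≤ (C'/γ)(E_τ(0) + 1 − γ + τ)` on `[t₁, T]`, where
`η_p = P ∘ h_p` and `E_τ(0) = γ|h(0) − h_p(0)| + τ|η(0) − η_p(0)|`. -/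
theorem singular_perturbation_velocity_bounds
    (N : ℕ) (C₀ T c₀ : ℝ) (hC₀ : 0 < C₀) (hT : 0 < T) (hc₀ : 0 < c₀) :
    (∃ C : ℝ, 0 < C ∧
      ∀ (τ γ : ℝ), 0 < τ → c₀ ≤ γ → γ ≤ 1 →
      ∀ (P : EuclideanSpace ℝ (Fin N) → EuclideanSpace ℝ (Fin N)),
        ContDiff ℝ 1 P →
      ∀ (hp h η : ℝ → EuclideanSpace ℝ (Fin N)),
        (∀ t ∈ Set.Icc (0 : ℝ) T,
          HasDerivWithinAt hp (P (hp t)) (Set.Icc 0 T) t) →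
        (∀ t ∈ Set.Icc (0 : ℝ) T,
          HasDerivWithinAt h (η t) (Set.Icc 0 T) t) →
        (∀ t ∈ Set.Icc (0 : ℝ) T,
          HasDerivWithinAt η (τ⁻¹ • (P (h t) - γ • η t)) (Set.Icc 0 T) t) →
        (∀ t ∈ Set.Icc (0 : ℝ) T, ‖P (hp t)‖ ≤ C₀) →
        (∀ t ∈ Set.Icc (0 : ℝ) T, ‖fderiv ℝ P (hp t)‖ ≤ C₀) →
        (∀ t ∈ Set.Icc (0 : ℝ) T, ∀ d : EuclideanSpace ℝ (Fin N),
          ‖P (hp t + d) - P (hp t)‖ ≤ C₀ * ‖d‖) →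
        (∫ t in Set.Icc (0 : ℝ) T, ‖η t - P (hp t)‖) ≤
          (C / γ) * ((γ * ‖h 0 - hp 0‖ + τ * ‖η 0 - P (hp 0)‖) + 1 - γ + τ)) ∧
    (∀ t₁ ∈ Set.Ioo (0 : ℝ) T, ∃ C' : ℝ, 0 < C' ∧
      ∀ (τ γ : ℝ), 0 < τ → c₀ ≤ γ → γ ≤ 1 →
      ∀ (P : EuclideanSpace ℝ (Fin N) → EuclideanSpace ℝ (Fin N)),
        ContDiff ℝ 1 P →
      ∀ (hp h η : ℝ → EuclideanSpace ℝ (Fin N)),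
        (∀ t ∈ Set.Icc (0 : ℝ) T,
          HasDerivWithinAt hp (P (hp t)) (Set.Icc 0 T) t) →
        (∀ t ∈ Set.Icc (0 : ℝ) T,
          HasDerivWithinAt h (η t) (Set.Icc 0 T) t) →
        (∀ t ∈ Set.Icc (0 : ℝ) T,
          HasDerivWithinAt η (τ⁻¹ • (P (h t) - γ • η t)) (Set.Icc 0 T) t) →
        (∀ t ∈ Set.Icc (0 : ℝ) T, ‖P (hp t)‖ ≤ C₀) →
        (∀ t ∈ Set.Icc (0 : ℝ) T, ‖fderiv ℝ P (hp t)‖ ≤ C₀) →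
        (∀ t ∈ Set.Icc (0 : ℝ) T, ∀ d : EuclideanSpace ℝ (Fin N),
          ‖P (hp t + d) - P (hp t)‖ ≤ C₀ * ‖d‖) →
        ∀ t ∈ Set.Icc t₁ T,
          ‖η t - P (hp t)‖ ≤
            (C' / γ) * ((γ * ‖h 0 - hp 0‖ + τ * ‖η 0 - P (hp 0)‖) + 1 - γ + τ)) := by
  have hK : 0 < C₀ * ((2 + C₀) * exp (C₀ * T / c₀)) / c₀ + C₀ + C₀ ^ 2 := by positivity
  set K := C₀ * ((2 + C₀) * exp (C₀ * T / c₀)) / c₀ + C₀ + C₀ ^ 2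
  refine ⟨⟨1 + T * K, by positivity,
      fun τ γ hτ hγc hγ1 P hP hp h η hhp hh hη hPb hDb hLip ↦ ?_⟩,
    fun t₁ ⟨ht₁, _⟩ ↦ ⟨1 / t₁ + K, by positivity,
      fun τ γ hτ hγc hγ1 P hP hp h η hhp hh hη hPb hDb hLip t ht ↦ ?_⟩⟩
  all_goals
    have hγ : 0 < γ := hc₀.trans_le hγc
    have hvel :=
      norm_velocity_error_le_of_layer_dynamics hc₀ hγc hγ1 hτ hC₀ hP hhp hh hη hPb hDb hLip
    set R := (γ * ‖h 0 - hp 0‖ + τ * ‖η 0 - P (hp 0)‖) + 1 - γ + τ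
    have hR : τ * ‖η 0 - P (hp 0)‖ ≤ R := by nlinarith [norm_nonneg (h 0 - hp 0)]
  · calc ∫ t in Icc 0 T, ‖η t - P (hp t)‖ ≤ ‖η 0 - P (hp 0)‖ / (γ / τ) + T * (K * R / γ) :=
          setIntegral_Icc_le_of_le_exp_mul_add hT.le (by positivity) (norm_nonneg _)
            (fun _ _ ↦ norm_nonneg _) hvel
      _ = (τ * ‖η 0 - P (hp 0)‖ + T * K * R) / γ := by field_simp
      _ ≤ (R + T * K * R) / γ := by gcongr
      _ = (1 + T * K) / γ * R := by ring
  · have ht₀ : 0 < t := ht₁.trans_le ht.1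
    calc ‖η t - P (hp t)‖ ≤ exp (-(γ / τ) * t) * ‖η 0 - P (hp 0)‖ + K * R / γ :=
          hvel t ⟨ht₀.le, ht.2⟩
      _ ≤ (γ / τ * t)⁻¹ * ‖η 0 - P (hp 0)‖ + K * R / γ := by
          rw [neg_mul]
          gcongr
          exact exp_neg_le_inv (by positivity)
      _ = τ * ‖η 0 - P (hp 0)‖ / (γ * t) + K * R / γ := by field_simp
      _ ≤ R / (γ * t₁) + K * R / γ := by
          gcongr
          exacts [(mul_nonneg hτ.le (norm_nonneg _)).trans hR, ht.1]
      _ = (1 / t₁ + K) / γ * R := by field_simp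
end

section
/- Existence and uniqueness of the normalized standing wave: for every ε > 0 there exists exactly one C² function Φ : ℝ → ℝ satisfying ε² Φ''(x) = f(Φ(x)) for all x ∈ ℝ, Φ(0) = 0, and Φ(x) → ±1 as x → ±∞; moreover this Φ satisfies −1 < Φ(x) < 1 and Φ'(x) > 0 for all x ∈ ℝ, and ε Φ'(x) = √(2F(Φ(x))) for all x ∈ ℝ. -/
open Filter Set Topology

/-!
Multiplying the equation by `Φ'` shows that `ε² Φ'² - 2 F(Φ)` is constant along a solution; as `Φ`
converges at `+∞`, `Φ'²` converges too, necessarily to `0`, so the constant vanishes. Since `F`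
vanishes to second order at `±1`, `√(2 F s) ≤ K |s ∓ 1|`, and Grönwall's inequality shows that a
solution touching `±1` would be constant. Hence `-1 < Φ < 1`, `Φ'` never vanishes, so it is
positive, and `ε Φ' = √(2 F(Φ))`. Separating variables, every solution satisfies
`x = ∫₀^{Φ x} ε / √(2 F s) ds`, which gives uniqueness. Conversely the right-hand side is strictly
increasing in `Φ x ∈ (-1, 1)` and, by the same quadratic bound, diverges logarithmically at `±1`;
its inverse is the standing wave.
-/

theorem eq_zero_of_tendsto_sq_deriv {f : ℝ → ℝ} {a L : ℝ} (hf : Differentiable ℝ f)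
    (hfa : Tendsto f atTop (𝓝 a)) (hL : Tendsto (fun x => deriv f x ^ 2) atTop (𝓝 L)) :
    L = 0 := by
  have hmvt : ∀ x, ∃ c ∈ Ioo x (x + 1), deriv f c = f (x + 1) - f x := fun x => by
    simpa using exists_deriv_eq_slope f (lt_add_one x) hf.continuous.continuousOn
      hf.differentiableOn
  choose c hc hcf using hmvt
  have hc_top : Tendsto c atTop atTop := tendsto_atTop_mono (fun x => (hc x).1.le) tendsto_id
  have hincr : Tendsto (fun x => (f (x + 1) - f x) ^ 2) atTop (𝓝 ((a - a) ^ 2)) :=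
    ((hfa.comp (tendsto_atTop_add_const_right _ 1 tendsto_id)).sub hfa).pow 2
  rw [sub_self, zero_pow two_ne_zero] at hincr
  refine tendsto_nhds_unique (hL.comp hc_top) (hincr.congr fun x => ?_)
  simp [hcf]

theorem eq_of_abs_deriv_le_mul_abs_sub_of_le {f : ℝ → ℝ} {K a x₀ x : ℝ}
    (hf : Differentiable ℝ f) (hK : ∀ y, |deriv f y| ≤ K * |f y - a|) (hx₀ : f x₀ = a)
    (hx : x₀ ≤ x) : f x = a :=
  sub_eq_zero.1 <| eq_zero_of_abs_deriv_le_mul_abs_self_of_eq_zero_right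
    (f := fun y => f y - a) (hf.continuous.sub continuous_const).continuousOn
    (fun y _ => ((hf y).hasDerivAt.sub_const a).hasDerivWithinAt) (sub_eq_zero.2 hx₀)
    (fun y _ => hK y) x ⟨hx, le_rfl⟩

theorem eq_of_abs_deriv_le_mul_abs_sub {f : ℝ → ℝ} {K a x₀ : ℝ} (hf : Differentiable ℝ f)
    (hK : ∀ y, |deriv f y| ≤ K * |f y - a|) (hx₀ : f x₀ = a) (x : ℝ) : f x = a := by
  rcases le_total x₀ x with hx | hx
  · exact eq_of_abs_deriv_le_mul_abs_sub_of_le hf hK hx₀ hx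
  · simpa using eq_of_abs_deriv_le_mul_abs_sub_of_le (f := fun y => f (-y)) (x₀ := -x₀)
      (hf.comp differentiable_neg) (fun y => by simpa [deriv_comp_neg] using hK (-y))
      (by simpa) (neg_le_neg hx)

theorem exists_abs_le_mul_sq_sub {F : ℝ → ℝ} {a : ℝ} (hF : ContDiff ℝ 2 F) (ha : F a = 0)
    (ha' : deriv F a = 0) (r : ℝ) : ∃ K : ℝ, ∀ s, |s - a| ≤ r → |F s| ≤ K * (s - a) ^ 2 := by
  obtain ⟨K, hK⟩ := (hF.deriv' (n := 1)).locallyLipschitz.locallyLipschitzOn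
    |>.exists_lipschitzOnWith_of_compact (isCompact_closedBall a r)
  refine ⟨K, fun s hs => ?_⟩
  have hsub : Metric.closedBall a |s - a| ⊆ Metric.closedBall a r :=
    Metric.closedBall_subset_closedBall hs
  have ha_mem : a ∈ Metric.closedBall a |s - a| := Metric.mem_closedBall_self (abs_nonneg _)
  have hderiv : ∀ y ∈ Metric.closedBall a |s - a|, ‖deriv F y‖ ≤ K * |s - a| := fun y hy => by
    have := hK.dist_le_mul y (hsub hy) a (hsub ha_mem)
    rw [dist_eq_norm, ha', sub_zero] at this
    exact this.trans (mul_le_mul_of_nonneg_left hy K.2)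
  have hmvt := (convex_closedBall a |s - a|).norm_image_sub_le_of_norm_deriv_le
    (fun y _ => (hF.differentiable two_ne_zero).differentiableAt) hderiv ha_mem
    (by simp [Real.dist_eq] : s ∈ Metric.closedBall a |s - a|)
  rw [ha, sub_zero, Real.norm_eq_abs, Real.norm_eq_abs, mul_assoc, abs_mul_abs_self, ← sq] at hmvt
  exact hmvt

theorem tendsto_integral_inv_nhdsLT_one {g : ℝ → ℝ} {K : ℝ} (hg : ContinuousOn g (Ico 0 1))
    (hpos : ∀ s ∈ Ico (0 : ℝ) 1, 0 < g s) (hle : ∀ s ∈ Ico (0 : ℝ) 1, g s ≤ K * (1 - s)) :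
    Tendsto (fun φ => ∫ s in 0..φ, (g s)⁻¹) (𝓝[<] 1) atTop := by
  have h0 : (0 : ℝ) ∈ Ico 0 1 := ⟨le_rfl, one_pos⟩
  have hK : 0 < K := by simpa using (hpos 0 h0).trans_le (hle 0 h0)
  have hlog : Tendsto (fun φ : ℝ => K⁻¹ * -Real.log (1 - φ)) (𝓝[<] 1) atTop := by
    have hsub : Tendsto (fun φ : ℝ => 1 - φ) (𝓝[<] 1) (𝓝[>] 0) := by
      refine tendsto_nhdsWithin_iff.2 ⟨?_, ?_⟩
      · exact ((continuous_sub_left 1).tendsto' 1 0 (sub_self 1)).mono_left nhdsWithin_le_nhds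
      · filter_upwards [self_mem_nhdsWithin] with φ (hφ : φ < 1) using sub_pos.2 hφ
    exact (tendsto_neg_atBot_atTop.comp (Real.tendsto_log_nhdsGT_zero.comp hsub)).const_mul_atTop
      (inv_pos.2 hK)
  refine tendsto_atTop_mono' _ ?_ hlog
  filter_upwards [Ico_mem_nhdsLT (zero_lt_one' ℝ)] with φ hφ
  have hsub : uIcc 0 φ ⊆ Ico 0 1 := by
    rw [uIcc_of_le hφ.1]; exact Icc_subset_Ico_right hφ.2
  have hg_int : IntervalIntegrable (fun s => (g s)⁻¹) MeasureTheory.volume 0 φ :=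
    ((hg.mono hsub).inv₀ fun s hs => (hpos s (hsub hs)).ne').intervalIntegrable
  have hlin_int : IntervalIntegrable (fun s => (K * (1 - s))⁻¹) MeasureTheory.volume 0 φ := by
    refine ContinuousOn.intervalIntegrable (ContinuousOn.inv₀ (by fun_prop) fun s hs => ?_)
    have := (hsub hs).2
    positivity
  calc K⁻¹ * -Real.log (1 - φ) = ∫ s in 0..φ, (K * (1 - s))⁻¹ := by
        have h0 : (0 : ℝ) ∉ uIcc (1 - φ) 1 := by
          rw [uIcc_of_le (by linarith [hφ.1])]
          exact fun h => (sub_pos.2 hφ.2).not_ge h.1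
        simp_rw [mul_inv]
        rw [intervalIntegral.integral_const_mul,
          intervalIntegral.integral_comp_sub_left (fun t => t⁻¹), sub_zero, integral_inv h0,
          one_div, Real.log_inv]
    _ ≤ ∫ s in 0..φ, (g s)⁻¹ := by
        refine intervalIntegral.integral_mono_on hφ.1 hlin_int hg_int fun s hs => ?_
        have hs' := Icc_subset_Ico_right hφ.2 hs
        exact inv_anti₀ (hpos s hs') (hle s hs')

theorem tendsto_integral_inv_nhdsGT_neg_one {g : ℝ → ℝ} {K : ℝ}
    (hg : ContinuousOn g (Ioc (-1) 0)) (hpos : ∀ s ∈ Ioc (-1 : ℝ) 0, 0 < g s)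
    (hle : ∀ s ∈ Ioc (-1 : ℝ) 0, g s ≤ K * (1 + s)) :
    Tendsto (fun φ => ∫ s in 0..φ, (g s)⁻¹) (𝓝[>] (-1)) atBot := by
  have hneg : MapsTo (fun s : ℝ => -s) (Ico 0 1) (Ioc (-1) 0) := fun s hs =>
    ⟨neg_lt_neg hs.2, neg_nonpos.2 hs.1⟩
  have h := tendsto_integral_inv_nhdsLT_one (g := fun s => g (-s)) (K := K)
    (hg.comp continuousOn_neg hneg) (fun s hs => hpos _ (hneg hs))
    (fun s hs => by simpa [sub_eq_add_neg] using hle _ (hneg hs))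
  refine (tendsto_neg_atTop_atBot.comp (h.comp (tendsto_neg_nhdsGT_neg (a := (1 : ℝ))))).congr
    fun φ => ?_
  simp only [Function.comp_apply, intervalIntegral.integral_comp_neg (fun s => (g s)⁻¹), neg_neg,
    neg_zero, intervalIntegral.integral_symm φ 0]

namespace StandingWave

structure IsDoubleWell (F : ℝ → ℝ) : Prop where
  contDiff : ContDiff ℝ 2 F
  apply_one : F 1 = 0
  apply_neg_one : F (-1) = 0
  deriv_one : deriv F 1 = 0
  deriv_neg_one : deriv F (-1) = 0
  pos_of_mem_Ioo : ∀ s ∈ Ioo (-1 : ℝ) 1, 0 < F s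

def IsStandingWave (F : ℝ → ℝ) (ε : ℝ) (Φ : ℝ → ℝ) : Prop :=
  ContDiff ℝ 2 Φ ∧ (∀ x, ε ^ 2 * deriv (deriv Φ) x = deriv F (Φ x)) ∧ Φ 0 = 0 ∧
    Tendsto Φ atTop (𝓝 1) ∧ Tendsto Φ atBot (𝓝 (-1))

noncomputable def derivAtLevel (F : ℝ → ℝ) (ε s : ℝ) : ℝ := √(2 * F s) / ε

noncomputable def positionOfLevel (F : ℝ → ℝ) (ε φ : ℝ) : ℝ :=
  ∫ s in 0..φ, (derivAtLevel F ε s)⁻¹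

noncomputable def profile (F : ℝ → ℝ) (ε : ℝ) : ℝ → ℝ :=
  Function.invFunOn (positionOfLevel F ε) (Ioo (-1) 1)

variable {F : ℝ → ℝ} {ε : ℝ}

lemma derivAtLevel_pos (hε : 0 < ε) {s : ℝ} (hs : 0 < F s) : 0 < derivAtLevel F ε s :=
  div_pos (Real.sqrt_pos.2 (by linarith)) hε

lemma continuous_derivAtLevel (hF : Continuous F) : Continuous (derivAtLevel F ε) :=
  (Real.continuous_sqrt.comp (continuous_const.mul hF)).div_const ε

lemma hasDerivAt_derivAtLevel (hε : ε ≠ 0) {s : ℝ} (hF : DifferentiableAt ℝ F s) (hs : 0 < F s) :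
    HasDerivAt (derivAtLevel F ε) (deriv F s / (ε ^ 2 * derivAtLevel F ε s)) s := by
  have hsqrt : √(2 * F s) ≠ 0 := (Real.sqrt_pos.2 (by linarith)).ne'
  refine (((hF.hasDerivAt.const_mul 2).sqrt (by linarith)).div_const ε).congr_deriv ?_
  rw [derivAtLevel]
  field_simp

lemma contDiffAt_derivAtLevel {s : ℝ} (hF : ContDiffAt ℝ 1 F s) (hs : 0 < F s) :
    ContDiffAt ℝ 1 (derivAtLevel F ε) s :=
  ((contDiffAt_const.mul hF).sqrt (by linarith)).div_const ε

lemma exists_derivAtLevel_le (hε : 0 < ε) {a : ℝ} (hF : ContDiff ℝ 2 F) (ha : F a = 0)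
    (ha' : deriv F a = 0) (r : ℝ) :
    ∃ K : ℝ, ∀ s, |s - a| ≤ r → derivAtLevel F ε s ≤ K * |s - a| := by
  obtain ⟨K, hK⟩ := exists_abs_le_mul_sq_sub hF ha ha' r
  refine ⟨√(2 * K) / ε, fun s hs => ?_⟩
  have hsq : 2 * F s ≤ 2 * K * (s - a) ^ 2 := by linarith [le_abs_self (F s), hK s hs]
  calc derivAtLevel F ε s ≤ √(2 * K * (s - a) ^ 2) / ε := by
        unfold derivAtLevel; gcongr
    _ = √(2 * K) / ε * |s - a| := by
        rw [Real.sqrt_mul' _ (sq_nonneg _), Real.sqrt_sq_eq_abs, div_mul_eq_mul_div]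

namespace IsDoubleWell

variable (hW : IsDoubleWell F) (hε : 0 < ε)
include hW hε

lemma continuousOn_inv_derivAtLevel :
    ContinuousOn (fun s => (derivAtLevel F ε s)⁻¹) (Ioo (-1) 1) :=
  (continuous_derivAtLevel hW.contDiff.continuous).continuousOn.inv₀ fun s hs =>
    (derivAtLevel_pos hε (hW.pos_of_mem_Ioo s hs)).ne'

lemma hasDerivAt_positionOfLevel {φ : ℝ} (hφ : φ ∈ Ioo (-1 : ℝ) 1) :
    HasDerivAt (positionOfLevel F ε) (derivAtLevel F ε φ)⁻¹ φ := by
  have hcont := hW.continuousOn_inv_derivAtLevel hε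
  exact intervalIntegral.integral_hasDerivAt_right
    (hcont.mono (ordConnected_Ioo.uIcc_subset ⟨by norm_num, by norm_num⟩ hφ)).intervalIntegrable
    (hcont.stronglyMeasurableAtFilter isOpen_Ioo φ hφ)
    (hcont.continuousAt (Ioo_mem_nhds hφ.1 hφ.2))

lemma continuousOn_positionOfLevel : ContinuousOn (positionOfLevel F ε) (Ioo (-1) 1) :=
  fun _ hφ => (hW.hasDerivAt_positionOfLevel hε hφ).continuousAt.continuousWithinAt

lemma strictMonoOn_positionOfLevel : StrictMonoOn (positionOfLevel F ε) (Ioo (-1) 1) := by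
  refine strictMonoOn_of_deriv_pos (convex_Ioo _ _) (hW.continuousOn_positionOfLevel hε)
    fun φ hφ => ?_
  rw [interior_Ioo] at hφ
  rw [(hW.hasDerivAt_positionOfLevel hε hφ).deriv]
  exact inv_pos.2 (derivAtLevel_pos hε (hW.pos_of_mem_Ioo φ hφ))

lemma tendsto_positionOfLevel_nhdsLT_one :
    Tendsto (positionOfLevel F ε) (𝓝[<] 1) atTop := by
  obtain ⟨K, hK⟩ := exists_derivAtLevel_le hε hW.contDiff hW.apply_one hW.deriv_one 1
  have hI : Ico (0 : ℝ) 1 ⊆ Ioo (-1) 1 := fun s hs => ⟨by linarith [hs.1], hs.2⟩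
  refine tendsto_integral_inv_nhdsLT_one (K := K)
    (continuous_derivAtLevel hW.contDiff.continuous).continuousOn
    (fun s hs => derivAtLevel_pos hε (hW.pos_of_mem_Ioo s (hI hs))) fun s hs => ?_
  have hs1 : |s - 1| = 1 - s := by rw [abs_sub_comm, abs_of_pos (sub_pos.2 hs.2)]
  exact hs1 ▸ hK s (by rw [hs1]; linarith [hs.1])

lemma tendsto_positionOfLevel_nhdsGT_neg_one :
    Tendsto (positionOfLevel F ε) (𝓝[>] (-1)) atBot := by
  obtain ⟨K, hK⟩ := exists_derivAtLevel_le hε hW.contDiff hW.apply_neg_one hW.deriv_neg_one 1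
  have hI : Ioc (-1 : ℝ) 0 ⊆ Ioo (-1) 1 := fun s hs => ⟨hs.1, by linarith [hs.2]⟩
  refine tendsto_integral_inv_nhdsGT_neg_one (K := K)
    (continuous_derivAtLevel hW.contDiff.continuous).continuousOn
    (fun s hs => derivAtLevel_pos hε (hW.pos_of_mem_Ioo s (hI hs))) fun s hs => ?_
  have hs1 : |s - -1| = 1 + s := by rw [sub_neg_eq_add, add_comm, abs_of_pos (by linarith [hs.1])]
  exact hs1 ▸ hK s (by rw [hs1]; linarith [hs.2])

lemma surjOn_positionOfLevel : SurjOn (positionOfLevel F ε) (Ioo (-1) 1) univ := by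
  intro x _
  obtain ⟨a, ha, hax⟩ := (Eventually.and (Ioo_mem_nhdsGT (by norm_num : (-1 : ℝ) < 1))
    ((hW.tendsto_positionOfLevel_nhdsGT_neg_one hε).eventually_le_atBot x)).exists
  obtain ⟨b, hb, hxb⟩ := (Eventually.and (Ioo_mem_nhdsLT (by norm_num : (-1 : ℝ) < 1))
    ((hW.tendsto_positionOfLevel_nhdsLT_one hε).eventually_ge_atTop x)).exists
  exact (hW.continuousOn_positionOfLevel hε).surjOn_Icc ha hb ⟨hax, hxb⟩


lemma profile_mem_Ioo (x : ℝ) : profile F ε x ∈ Ioo (-1) 1 :=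
  (Function.invFunOn_pos (hW.surjOn_positionOfLevel hε (mem_univ x))).1

lemma positionOfLevel_profile (x : ℝ) : positionOfLevel F ε (profile F ε x) = x :=
  (Function.invFunOn_pos (hW.surjOn_positionOfLevel hε (mem_univ x))).2

lemma profile_positionOfLevel {φ : ℝ} (hφ : φ ∈ Ioo (-1 : ℝ) 1) :
    profile F ε (positionOfLevel F ε φ) = φ :=
  (hW.strictMonoOn_positionOfLevel hε).injOn (hW.profile_mem_Ioo hε _) hφ
    (hW.positionOfLevel_profile hε _)

lemma range_profile : range (profile F ε) = Ioo (-1) 1 :=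
  (range_subset_iff.2 (hW.profile_mem_Ioo hε)).antisymm fun _ hφ =>
    ⟨_, hW.profile_positionOfLevel hε hφ⟩

lemma strictMono_profile : StrictMono (profile F ε) := fun x y hxy => by
  rwa [← (hW.strictMonoOn_positionOfLevel hε).lt_iff_lt (hW.profile_mem_Ioo hε x)
    (hW.profile_mem_Ioo hε y), hW.positionOfLevel_profile hε, hW.positionOfLevel_profile hε]

lemma continuous_profile : Continuous (profile F ε) :=
  continuous_iff_continuousAt.2 fun x =>
    (hW.strictMono_profile hε).strictMonoOn univ |>.continuousAt_of_image_mem_nhds univ_mem <| by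
      rw [image_univ, hW.range_profile hε]
      exact Ioo_mem_nhds (hW.profile_mem_Ioo hε x).1 (hW.profile_mem_Ioo hε x).2

lemma hasDerivAt_profile (x : ℝ) :
    HasDerivAt (profile F ε) (derivAtLevel F ε (profile F ε x)) x := by
  have hD := derivAtLevel_pos hε (hW.pos_of_mem_Ioo _ (hW.profile_mem_Ioo hε x))
  simpa using (hW.hasDerivAt_positionOfLevel hε (hW.profile_mem_Ioo hε x)).of_local_left_inverse
    (hW.continuous_profile hε).continuousAt (inv_ne_zero hD.ne')
    (Eventually.of_forall (hW.positionOfLevel_profile hε))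

lemma deriv_profile : deriv (profile F ε) = fun x => derivAtLevel F ε (profile F ε x) :=
  funext fun x => (hW.hasDerivAt_profile hε x).deriv

lemma contDiff_profile : ContDiff ℝ 2 (profile F ε) := by
  have hdiff : Differentiable ℝ (profile F ε) := fun x =>
    (hW.hasDerivAt_profile hε x).differentiableAt
  have hC1 : ContDiff ℝ 1 (profile F ε) := contDiff_one_iff_deriv.2
    ⟨hdiff, hW.deriv_profile hε ▸
      (continuous_derivAtLevel hW.contDiff.continuous).comp (hW.continuous_profile hε)⟩
  rw [show (2 : WithTop ℕ∞) = 1 + 1 from rfl, contDiff_succ_iff_deriv, hW.deriv_profile hε]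
  refine ⟨hdiff, by simp, contDiff_iff_contDiffAt.2 fun x => ?_⟩
  exact (contDiffAt_derivAtLevel (hW.contDiff.of_le (by norm_num)).contDiffAt
    (hW.pos_of_mem_Ioo _ (hW.profile_mem_Ioo hε x))).comp x hC1.contDiffAt

lemma profile_ode (x : ℝ) :
    ε ^ 2 * deriv (deriv (profile F ε)) x = deriv F (profile F ε x) := by
  have hpos := hW.pos_of_mem_Ioo _ (hW.profile_mem_Ioo hε x)
  have hD := (derivAtLevel_pos hε hpos).ne'
  have h : HasDerivAt (fun y => derivAtLevel F ε (profile F ε y)) _ x :=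
    (hasDerivAt_derivAtLevel hε.ne' ((hW.contDiff.differentiable two_ne_zero) _) hpos).comp x
      (hW.hasDerivAt_profile hε x)
  rw [hW.deriv_profile hε, h.deriv]
  field_simp

lemma isStandingWave_profile : IsStandingWave F ε (profile F ε) := by
  have hmono := (hW.strictMono_profile hε).monotone
  refine ⟨hW.contDiff_profile hε, hW.profile_ode hε, ?_, ?_, ?_⟩
  · simpa [positionOfLevel] using hW.profile_positionOfLevel hε (φ := 0) (by norm_num)
  · exact tendsto_atTop_isLUB hmono (hW.range_profile hε ▸ isLUB_Ioo (by norm_num))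
  · exact tendsto_atBot_isGLB hmono (hW.range_profile hε ▸ isGLB_Ioo (by norm_num))

end IsDoubleWell

namespace IsStandingWave

variable {Φ : ℝ → ℝ} (hΦ : IsStandingWave F ε Φ)
include hΦ

lemma sq_deriv (hF : Differentiable ℝ F) (h1 : F 1 = 0) (hε : ε ≠ 0) (x : ℝ) :
    ε ^ 2 * deriv Φ x ^ 2 = 2 * F (Φ x) := by
  obtain ⟨hC2, hode, -, htop, -⟩ := hΦ
  have hd : Differentiable ℝ Φ := hC2.differentiable two_ne_zero
  have hd' : Differentiable ℝ (deriv Φ) := (hC2.deriv' (n := 1)).differentiable one_ne_zero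
  set E : ℝ → ℝ := fun x => ε ^ 2 * deriv Φ x ^ 2 - 2 * F (Φ x) with hE_def
  have hE : ∀ x, HasDerivAt E 0 x := fun x => by
    refine ((((hd' x).hasDerivAt.pow 2).const_mul (ε ^ 2)).sub
      (((hF (Φ x)).hasDerivAt.comp x (hd x).hasDerivAt).const_mul 2)).congr_deriv ?_
    linear_combination (2 * deriv Φ x) * hode x
  have hconst : ∀ x, E x = E 0 := fun x =>
    is_const_of_deriv_eq_zero (fun y => (hE y).differentiableAt) (fun y => (hE y).deriv) x 0
  have hlim : Tendsto (fun x => deriv Φ x ^ 2) atTop (𝓝 ((E 0 + 2 * 0) / ε ^ 2)) := by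
    have hF1 : Tendsto (fun x => F (Φ x)) atTop (𝓝 0) := h1 ▸ (hF.continuous.tendsto 1).comp htop
    refine (((hF1.const_mul 2).const_add (E 0)).div_const (ε ^ 2)).congr fun x => ?_
    rw [← hconst x, hE_def]
    field_simp
    ring
  have hE0 : E 0 = 0 := by simpa [hε] using eq_zero_of_tendsto_sq_deriv hd htop hlim
  linarith [hconst x]

lemma abs_deriv_eq (hF : Differentiable ℝ F) (h1 : F 1 = 0) (hε : 0 < ε) (x : ℝ) :
    |deriv Φ x| = derivAtLevel F ε (Φ x) := by
  rw [derivAtLevel, ← hΦ.sq_deriv hF h1 hε.ne' x, ← mul_pow, Real.sqrt_sq_eq_abs, abs_mul,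
    abs_of_pos hε, mul_div_cancel_left₀ _ hε.ne']

lemma apply_ne (hF : ContDiff ℝ 2 F) (h1 : F 1 = 0) (hε : 0 < ε) {a : ℝ} (ha : F a = 0)
    (ha' : deriv F a = 0) (ha0 : a ≠ 0) (x : ℝ) : Φ x ≠ a := by
  have hd : Differentiable ℝ Φ := hΦ.1.differentiable two_ne_zero
  obtain ⟨r, hr⟩ : ∃ r, ∀ y, |Φ y - a| ≤ r := by
    have hb : Bornology.IsBounded (range Φ) :=
      hd.continuous.isBounded_range_iff_isBigO_atTop_atBot.2
        ⟨hΦ.2.2.2.1.isBigO_one ℝ, hΦ.2.2.2.2.isBigO_one ℝ⟩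
    obtain ⟨r, hr⟩ := (Metric.isBounded_iff_subset_closedBall a).1 hb
    exact ⟨r, fun y => by simpa [Real.dist_eq] using hr ⟨y, rfl⟩⟩
  obtain ⟨K, hK⟩ := exists_derivAtLevel_le hε hF ha ha' r
  have hbound : ∀ y, |deriv Φ y| ≤ K * |Φ y - a| := fun y =>
    (hΦ.abs_deriv_eq (hF.differentiable two_ne_zero) h1 hε y).trans_le (hK _ (hr y))
  exact fun hx => ha0 (hΦ.2.2.1 ▸ eq_of_abs_deriv_le_mul_abs_sub hd hbound hx 0).symm

variable (hW : IsDoubleWell F) (hε : 0 < ε)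
include hW hε

lemma mem_Ioo (x : ℝ) : Φ x ∈ Ioo (-1) 1 := by
  have hconn : (range Φ).OrdConnected := (isPreconnected_range hΦ.1.continuous).ordConnected
  have h0 : (0 : ℝ) ∈ range Φ := ⟨0, hΦ.2.2.1⟩
  have hnot : ∀ a, F a = 0 → deriv F a = 0 → a ≠ 0 → a ∉ range Φ := fun a ha ha' ha0 ⟨y, hy⟩ =>
    hΦ.apply_ne hW.contDiff hW.apply_one hε ha ha' ha0 y hy
  constructor
  · by_contra! h
    exact hnot (-1) hW.apply_neg_one hW.deriv_neg_one (by norm_num)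
      (hconn.out ⟨x, rfl⟩ h0 ⟨h, by norm_num⟩)
  · by_contra! h
    exact hnot 1 hW.apply_one hW.deriv_one one_ne_zero (hconn.out h0 ⟨x, rfl⟩ ⟨by norm_num, h⟩)

lemma deriv_pos (x : ℝ) : 0 < deriv Φ x := by
  have hd : Differentiable ℝ Φ := hΦ.1.differentiable two_ne_zero
  have hne : ∀ y ∈ univ, deriv Φ y ≠ 0 := fun y _ => abs_pos.1 <|
    (hΦ.abs_deriv_eq (hW.contDiff.differentiable two_ne_zero) hW.apply_one hε y).symm ▸
      derivAtLevel_pos hε (hW.pos_of_mem_Ioo _ (hΦ.mem_Ioo hW hε y))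
  refine (hasDerivWithinAt_forall_lt_or_forall_gt_of_forall_ne convex_univ
    (fun y _ => (hd y).hasDerivAt.hasDerivWithinAt) hne).resolve_left (fun hneg => ?_) x trivial
  have hanti := strictAnti_of_deriv_neg fun y => hneg y trivial
  have : (1 : ℝ) ≤ 0 := le_of_tendsto hΦ.2.2.2.1 <|
    (eventually_gt_atTop 0).mono fun y hy => hΦ.2.2.1 ▸ (hanti hy).le
  norm_num at this

lemma deriv_eq (x : ℝ) : deriv Φ x = derivAtLevel F ε (Φ x) := by
  rw [← abs_of_pos (hΦ.deriv_pos hW hε x),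
    hΦ.abs_deriv_eq (hW.contDiff.differentiable two_ne_zero) hW.apply_one hε]

lemma positionOfLevel_apply (x : ℝ) : positionOfLevel F ε (Φ x) = x := by
  have hderiv : ∀ y, HasDerivAt (fun y => positionOfLevel F ε (Φ y) - y) 0 y := fun y => by
    have h := ((hW.hasDerivAt_positionOfLevel hε (hΦ.mem_Ioo hW hε y)).comp y
      ((hΦ.1.differentiable two_ne_zero) y).hasDerivAt).sub (hasDerivAt_id y)
    rwa [hΦ.deriv_eq hW hε y, inv_mul_cancel₀ (derivAtLevel_pos hε
      (hW.pos_of_mem_Ioo _ (hΦ.mem_Ioo hW hε y))).ne', sub_self] at h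
  have := is_const_of_deriv_eq_zero (fun y => (hderiv y).differentiableAt)
    (fun y => (hderiv y).deriv) x 0
  simp only [hΦ.2.2.1, positionOfLevel, intervalIntegral.integral_same, sub_zero] at this
  exact sub_eq_zero.1 this

lemma eq {Ψ : ℝ → ℝ} (hΨ : IsStandingWave F ε Ψ) : Φ = Ψ :=
  funext fun x => (hW.strictMonoOn_positionOfLevel hε).injOn (hΦ.mem_Ioo hW hε x)
    (hΨ.mem_Ioo hW hε x)
    (by rw [hΦ.positionOfLevel_apply hW hε, hΨ.positionOfLevel_apply hW hε])

end IsStandingWave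

end StandingWave

theorem standing_wave_exists_unique_general
    (F : ℝ → ℝ) (hF : ContDiff ℝ 2 F)
    (h1 : F 1 = 0) (h1' : F (-1) = 0)
    (h2 : deriv F 1 = 0) (h2' : deriv F (-1) = 0)
    (h4 : ∀ s : ℝ, s ≠ 1 → s ≠ -1 → 0 < F s)
    (ε : ℝ) (hε : 0 < ε) :
    (∃! Φ : ℝ → ℝ,
      ContDiff ℝ 2 Φ ∧
      (∀ x : ℝ, ε ^ 2 * deriv (deriv Φ) x = deriv F (Φ x)) ∧
      Φ 0 = 0 ∧
      Tendsto Φ atTop (nhds 1) ∧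
      Tendsto Φ atBot (nhds (-1))) ∧
    (∀ Φ : ℝ → ℝ,
      ContDiff ℝ 2 Φ →
      (∀ x : ℝ, ε ^ 2 * deriv (deriv Φ) x = deriv F (Φ x)) →
      Φ 0 = 0 →
      Tendsto Φ atTop (nhds 1) →
      Tendsto Φ atBot (nhds (-1)) →
      ∀ x : ℝ, -1 < Φ x ∧ Φ x < 1 ∧ 0 < deriv Φ x ∧
        ε * deriv Φ x = Real.sqrt (2 * F (Φ x))) := by
  have hW : StandingWave.IsDoubleWell F := ⟨hF, h1, h1', h2, h2', fun s hs => h4 s hs.2.ne hs.1.ne'⟩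
  have hprofile := hW.isStandingWave_profile hε
  refine ⟨⟨_, hprofile, fun Φ hΦ => StandingWave.IsStandingWave.eq hΦ hW hε hprofile⟩, ?_⟩
  intro Φ hC2 hode h0 htop hbot x
  have hΦ : StandingWave.IsStandingWave F ε Φ := ⟨hC2, hode, h0, htop, hbot⟩
  refine ⟨(hΦ.mem_Ioo hW hε x).1, (hΦ.mem_Ioo hW hε x).2, hΦ.deriv_pos hW hε x, ?_⟩
  rw [hΦ.deriv_eq hW hε, StandingWave.derivAtLevel, mul_div_cancel₀ _ hε.ne']

/-- Existence and uniqueness of the normalized standing wave: for every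
`ε > 0` there is exactly one `C²` function `Φ : ℝ → ℝ` with
`ε² Φ'' = f(Φ)` (`f := F'`), `Φ(0) = 0` and `Φ(x) → ±1` as `x → ±∞`;
moreover this `Φ` satisfies `−1 < Φ < 1`, `Φ' > 0` and
`ε Φ' = √(2 F(Φ))` everywhere. -/
theorem standing_wave_exists_unique
    (F : ℝ → ℝ) (hF : ContDiff ℝ 2 F)
    (h1 : F 1 = 0) (h1' : F (-1) = 0)
    (h2 : deriv F 1 = 0) (h2' : deriv F (-1) = 0)
    (h3 : 0 < deriv (deriv F) 1) (h3' : 0 < deriv (deriv F) (-1))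
    (h4 : ∀ s : ℝ, s ≠ 1 → s ≠ -1 → 0 < F s)
    (ε : ℝ) (hε : 0 < ε) :
    (∃! Φ : ℝ → ℝ,
      ContDiff ℝ 2 Φ ∧
      (∀ x : ℝ, ε ^ 2 * deriv (deriv Φ) x = deriv F (Φ x)) ∧
      Φ 0 = 0 ∧
      Tendsto Φ atTop (nhds 1) ∧
      Tendsto Φ atBot (nhds (-1))) ∧
    (∀ Φ : ℝ → ℝ,
      ContDiff ℝ 2 Φ →
      (∀ x : ℝ, ε ^ 2 * deriv (deriv Φ) x = deriv F (Φ x)) →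
      Φ 0 = 0 →
      Tendsto Φ atTop (nhds 1) →
      Tendsto Φ atBot (nhds (-1)) →
      ∀ x : ℝ, -1 < Φ x ∧ Φ x < 1 ∧ 0 < deriv Φ x ∧
        ε * deriv Φ x = Real.sqrt (2 * F (Φ x))) :=
  standing_wave_exists_unique_general F hF h1 h1' h2 h2' h4 ε hε
end
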